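/- arXiv:0707.2707 — 9 statements merged into one kernel-verified Lean document; each statement's English description precedes it below -/
import Mathlib

section
/- For a finite nonempty set A of integers, |3A| ≥ (3/2)|2A| − 1/2, i.e., 2|3A| ≥ 3|2A| − 1, where kA denotes the k-fold sumset A + ⋯ + A. -/
/-!
Let `a = min A`, `b = max A` and split `2A` at `a + b ∈ 2A` into a lower part `L` and an upper
part `U`, so that `|L| + |U| + 1 = |2A|`. The translates `L + a` and `2A + b` are disjoint
subsets of `3A` (everything in the first lies below `2a + b`, everything in the second above it),
and so are `2A + a` and `U + b`. Adding the two resulting bounds gives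
`2|3A| ≥ 2|2A| + |L| + |U| = 3|2A| - 1`.
-/

open Pointwise

namespace Finset

theorem card_add_card_le_card_add {α : Type*} [Add α] [IsRightCancelAdd α] [DecidableEq α]
    {X Y S A : Finset α} {a b : α} (hX : X ⊆ S) (hY : Y ⊆ S) (ha : a ∈ A) (hb : b ∈ A)
    (hXY : ∀ x ∈ X, ∀ y ∈ Y, x + a ≠ y + b) : #X + #Y ≤ #(S + A) := by
  have hdisj : Disjoint (X + {a}) (Y + {b}) := by
    simp only [disjoint_left, mem_add, mem_singleton]
    rintro _ ⟨x, hx, _, rfl, rfl⟩ ⟨y, hy, _, rfl, hxy⟩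
    exact hXY x hx y hy hxy.symm
  calc #X + #Y = #(X + {a} ∪ (Y + {b})) := by
        rw [card_union_of_disjoint hdisj, card_add_singleton, card_add_singleton]
    _ ≤ #(S + A) :=
        card_le_card <| union_subset (add_subset_add hX (singleton_subset_iff.2 ha))
          (add_subset_add hY (singleton_subset_iff.2 hb))

section LinearOrder

variable {α : Type*} [LinearOrder α]

theorem card_filter_lt_add_card_filter_gt {S : Finset α} {m : α} (hm : m ∈ S) :
    #{s ∈ S | s < m} + #{s ∈ S | m < s} + 1 = #S := by
  have hlt : {s ∈ S.erase m | s < m} = {s ∈ S | s < m} := by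
    ext s; simp only [mem_filter, mem_erase]; constructor
    · exact fun h => ⟨h.1.2, h.2⟩
    · exact fun h => ⟨⟨h.2.ne, h.1⟩, h.2⟩
  have hgt : {s ∈ S.erase m | ¬s < m} = {s ∈ S | m < s} := by
    ext s; simp only [mem_filter, mem_erase, not_lt]; constructor
    · exact fun h => ⟨h.1.2, lt_of_le_of_ne h.2 (Ne.symm h.1.1)⟩
    · exact fun h => ⟨⟨h.2.ne', h.1⟩, h.2.le⟩
  rw [← hlt, ← hgt, card_filter_add_card_filter_not, card_erase_add_one hm]

variable [AddCommMonoid α] [IsOrderedCancelAddMonoid α] {A : Finset α}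

theorem min'_add_min'_le_of_mem_add {B : Finset α} (hA : A.Nonempty) (hB : B.Nonempty) {s : α}
    (hs : s ∈ A + B) : A.min' hA + B.min' hB ≤ s := by
  obtain ⟨x, hx, y, hy, rfl⟩ := mem_add.1 hs
  exact add_le_add (min'_le A x hx) (min'_le B y hy)

theorem le_max'_add_max'_of_mem_add {B : Finset α} (hA : A.Nonempty) (hB : B.Nonempty) {s : α}
    (hs : s ∈ A + B) : s ≤ A.max' hA + B.max' hB := by
  obtain ⟨x, hx, y, hy, rfl⟩ := mem_add.1 hs
  exact add_le_add (le_max' A x hx) (le_max' B y hy)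

theorem card_filter_lt_add_card_le_card_add_add (hA : A.Nonempty) :
    #{s ∈ A + A | s < A.min' hA + A.max' hA} + #(A + A) ≤ #(A + A + A) := by
  refine card_add_card_le_card_add (filter_subset _ _) subset_rfl (min'_mem A hA)
    (max'_mem A hA) fun x hx y hy => ne_of_lt ?_
  calc x + A.min' hA < A.min' hA + A.max' hA + A.min' hA :=
        add_lt_add_left (mem_filter.1 hx).2 _
    _ = A.min' hA + A.min' hA + A.max' hA := add_right_comm _ _ _
    _ ≤ y + A.max' hA := add_le_add_left (min'_add_min'_le_of_mem_add hA hA hy) _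

theorem card_add_card_filter_gt_le_card_add_add (hA : A.Nonempty) :
    #(A + A) + #{s ∈ A + A | A.min' hA + A.max' hA < s} ≤ #(A + A + A) := by
  refine card_add_card_le_card_add subset_rfl (filter_subset _ _) (min'_mem A hA)
    (max'_mem A hA) fun x hx y hy => ne_of_lt ?_
  calc x + A.min' hA ≤ A.max' hA + A.max' hA + A.min' hA :=
        add_le_add_left (le_max'_add_max'_of_mem_add hA hA hx) _
    _ = A.min' hA + A.max' hA + A.max' hA := by rw [add_right_comm, add_comm (A.max' hA) (A.min' hA)]
    _ < y + A.max' hA := add_lt_add_left (mem_filter.1 hy).2 _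

end LinearOrder

end Finset

open Finset in
theorem three_fold_vs_two_fold (A : Finset ℤ) (hA : A.Nonempty) :
    3 * (A + A).card - 1 ≤ 2 * (A + A + A).card := by
  have hlower := card_filter_lt_add_card_le_card_add_add hA
  have hupper := card_add_card_filter_gt_le_card_add_add hA
  have hsplit := card_filter_lt_add_card_filter_gt (add_mem_add (min'_mem A hA) (max'_mem A hA))
  omega
end

section
/- For finite nonempty sets of integers A, B, C, the inequality 2|A + B + C| ≥ |A + B| + |B + C| + |A + C| − 1 holds. -/
/-!
Let `M = max A`, `m = min C` and `S = A + B + C`. The translates `(A + B) + m` and `M + (B + C)`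
lie in `S`. Each `z ∈ A + C` other than `M + m` gives an element of `S` outside one of them:
if `z < M + m` then `z + min B` lies strictly below `M + (B + C)`, and if `z > M + m` then
`z + max B` lies strictly above `(A + B) + m`. Hence `|A + C| - 1 ≤ (|S| - |B + C|) + (|S| - |A + B|)`.
-/

open Pointwise

namespace Finset

lemma card_add_card_le_card_of_forall_lt {α : Type*} [Preorder α] [DecidableEq α]
    {X Y S : Finset α} (hX : X ⊆ S) (hY : Y ⊆ S) (hXY : ∀ x ∈ X, ∀ y ∈ Y, x < y) :
    #X + #Y ≤ #S := by
  rw [← card_union_of_disjoint (disjoint_left.2 fun x hx hy => (hXY x hx x hy).false)]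
  exact card_le_card (union_subset hX hY)

lemma card_le_card_filter_lt_add_card_filter_gt {α : Type*} [LinearOrder α]
    (s : Finset α) (p : α) :
    #s ≤ #(s.filter (· < p)) + #(s.filter (p < ·)) + 1 := by
  calc #s ≤ #(s.filter (· < p) ∪ s.filter (p < ·) ∪ {p}) := by
        refine card_le_card fun z hz => ?_
        simp only [mem_union, mem_filter, mem_singleton]
        rcases lt_trichotomy z p with h | h | h <;> simp [hz, h]
    _ ≤ #(s.filter (· < p)) + #(s.filter (p < ·)) + 1 :=
        (card_union_le _ _).trans (Nat.add_le_add_right (card_union_le _ _) _)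

section OrderedCancelAddCommMonoid

variable {α : Type*} [AddCommMonoid α] [LinearOrder α] [IsOrderedCancelAddMonoid α]
  [DecidableEq α] {A B C : Finset α}

lemma card_filter_lt_add_card_add_le_card_add_add (hA : A.Nonempty) (hB : B.Nonempty)
    (hC : C.Nonempty) :
    #((A + C).filter (· < A.max' hA + C.min' hC)) + #(B + C) ≤ #(A + B + C) := by
  set M := A.max' hA
  set m := C.min' hC
  set b₀ := B.min' hB
  have h := card_add_card_le_card_of_forall_lt
    (X := (A + C).filter (· < M + m) + {b₀}) (Y := {M} + (B + C)) (S := A + B + C) ?_ ?_ ?_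
  · simpa using h
  · rw [add_right_comm]
    exact add_subset_add (filter_subset _ _) (singleton_subset_iff.2 (min'_mem B hB))
  · rw [add_assoc]
    exact add_subset_add_right (singleton_subset_iff.2 (max'_mem A hA))
  · simp only [mem_add, mem_singleton, mem_filter]
    rintro _ ⟨z, ⟨-, hz⟩, _, rfl, rfl⟩ _ ⟨_, rfl, _, ⟨b, hb, c, hc, rfl⟩, rfl⟩
    calc z + b₀ < M + m + b₀ := add_lt_add_left hz _
      _ = M + (b₀ + m) := by rw [add_assoc, add_comm m]
      _ ≤ M + (b + c) := by gcongr; exacts [min'_le _ _ hb, min'_le _ _ hc]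

lemma card_add_add_card_filter_gt_le_card_add_add (hA : A.Nonempty) (hB : B.Nonempty)
    (hC : C.Nonempty) :
    #(A + B) + #((A + C).filter (A.max' hA + C.min' hC < ·)) ≤ #(A + B + C) := by
  set M := A.max' hA
  set m := C.min' hC
  set b₁ := B.max' hB
  have h := card_add_card_le_card_of_forall_lt
    (X := A + B + {m}) (Y := (A + C).filter (M + m < ·) + {b₁}) (S := A + B + C) ?_ ?_ ?_
  · simpa using h
  · exact add_subset_add_left (singleton_subset_iff.2 (min'_mem C hC))
  · rw [add_right_comm]
    exact add_subset_add (filter_subset _ _) (singleton_subset_iff.2 (max'_mem B hB))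
  · simp only [mem_add, mem_singleton, mem_filter]
    rintro _ ⟨_, ⟨a, ha, b, hb, rfl⟩, _, rfl, rfl⟩ _ ⟨z, ⟨-, hz⟩, _, rfl, rfl⟩
    calc a + b + m ≤ M + b₁ + m := by gcongr; exacts [le_max' _ _ ha, le_max' _ _ hb]
      _ = M + m + b₁ := add_right_comm _ _ _
      _ < z + b₁ := add_lt_add_left hz _

end OrderedCancelAddCommMonoid

end Finset

open Finset

theorem superadditivity_three_sets (A B C : Finset ℤ)
    (hA : A.Nonempty) (hB : B.Nonempty) (hC : C.Nonempty) :
    (A + B).card + (B + C).card + (A + C).card - 1 ≤ 2 * (A + B + C).card := by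
  have hlow := card_filter_lt_add_card_add_le_card_add_add hA hB hC
  have hhigh := card_add_add_card_filter_gt_le_card_add_add hA hB hC
  have hsplit := (A + C).card_le_card_filter_lt_add_card_filter_gt (A.max' hA + C.min' hC)
  omega
end

section
/- Let A₁, …, A_k be finite nonempty sets of integers (k ≥ 2). Let S = A₁ + ⋯ + A_k and, for each i, S_i = A₁ + ⋯ + A_{i−1} + A_{i+1} + ⋯ + A_k (the sum omitting A_i). Then (k − 1)|S| ≥ (∑_{i=1}^k |S_i|) − 1. -/
open Pointwise Finset

/-!
Write `S = A₁ + ⋯ + A_k`, `S_i` for the sum omitting `A_i`, and `a_i = min A_i`, `b_i = max A_i`.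
Both translates `a_i + S_i` and `b_i + S_i` lie in `S`. Starting from `W₀ = S`, put
`W_i = (b_i - a_i) + (W_{i-1} ∩ (a_i + S_i))`; every `W_i` lies in `S`, so inclusion–exclusion
inside `S` gives `|W_{i-1}| + |S_i| ≤ |S| + |W_i|`, and summing over `i` yields
`|S| + ∑ |S_i| ≤ k |S| + |W_k|`. Finally, starting from `min S = ∑ a_i`, each step raises a lower
bound of `W_i` by `b_i - a_i`, so every element of `W_k` is at least `∑ b_i = max S`, whence
`|W_k| ≤ 1`.
-/

namespace Finset

variable {ι G : Type*}

theorem card_add_card_le_card_add_card_inter [DecidableEq G] {S W Y : Finset G}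
    (hW : W ⊆ S) (hY : Y ⊆ S) : #W + #Y ≤ #S + #(W ∩ Y) := by
  rw [← card_union_add_card_inter]
  exact Nat.add_le_add_right (card_le_card (union_subset hW hY)) _

section SumBounds

variable [AddCommMonoid G] [Preorder G] [IsOrderedAddMonoid G] [DecidableEq G]
  {s : Finset ι} {A : ι → Finset G} {f : ι → G} {x : G}

theorem sum_le_of_mem_sum (hf : ∀ i ∈ s, ∀ y ∈ A i, f i ≤ y) (hx : x ∈ ∑ i ∈ s, A i) :
    ∑ i ∈ s, f i ≤ x := by
  rw [← mem_coe, coe_sum, Set.mem_finsetSum] at hx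
  obtain ⟨g, hg, rfl⟩ := hx
  exact sum_le_sum fun i hi => hf i hi (g i) (hg hi)

theorem le_sum_of_mem_sum (hf : ∀ i ∈ s, ∀ y ∈ A i, y ≤ f i) (hx : x ∈ ∑ i ∈ s, A i) :
    x ≤ ∑ i ∈ s, f i := by
  rw [← mem_coe, coe_sum, Set.mem_finsetSum] at hx
  obtain ⟨g, hg, rfl⟩ := hx
  exact sum_le_sum fun i hi => hf i hi (g i) (hg hi)

end SumBounds

section Chain

variable [DecidableEq G] (Y : ι → Finset G) (c : ι → G)

def translateInterChain [Add G] : List ι → Finset G → Finset G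
  | [], W => W
  | i :: l, W => translateInterChain l (c i +ᵥ (W ∩ Y i))

variable {Y c} {S W : Finset G}

theorem translateInterChain_subset [Add G] {l : List ι} (hcY : ∀ i ∈ l, c i +ᵥ Y i ⊆ S)
    (hW : W ⊆ S) : translateInterChain Y c l W ⊆ S := by
  induction l generalizing W with
  | nil => exact hW
  | cons i l ih =>
    refine ih (fun j hj => hcY j (List.mem_cons_of_mem i hj)) ?_
    exact (vadd_finset_subset_vadd_finset inter_subset_right).trans (hcY i List.mem_cons_self)

theorem card_add_sum_card_le_translateInterChain [AddGroup G] {l : List ι}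
    (hY : ∀ i ∈ l, Y i ⊆ S) (hcY : ∀ i ∈ l, c i +ᵥ Y i ⊆ S) (hW : W ⊆ S) :
    #W + (l.map fun i => #(Y i)).sum ≤ l.length * #S + #(translateInterChain Y c l W) := by
  induction l generalizing W with
  | nil => simp [translateInterChain]
  | cons i l ih =>
    have hW' : c i +ᵥ (W ∩ Y i) ⊆ S :=
      (vadd_finset_subset_vadd_finset inter_subset_right).trans (hcY i List.mem_cons_self)
    have hstep := card_add_card_le_card_add_card_inter hW (hY i List.mem_cons_self)
    have hrest := ih (fun j hj => hY j (List.mem_cons_of_mem i hj))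
      (fun j hj => hcY j (List.mem_cons_of_mem i hj)) hW'
    rw [card_vadd_finset] at hrest
    simp only [List.map_cons, List.sum_cons, List.length_cons, translateInterChain]
    linarith

theorem add_sum_le_of_mem_translateInterChain [AddCommMonoid G] [Preorder G]
    [IsOrderedAddMonoid G] {l : List ι} {m : G} (hW : ∀ y ∈ W, m ≤ y) :
    ∀ x ∈ translateInterChain Y c l W, m + (l.map c).sum ≤ x := by
  induction l generalizing m W with
  | nil => simpa [translateInterChain] using hW
  | cons i l ih =>
    intro x hx
    have hW' : ∀ y ∈ c i +ᵥ (W ∩ Y i), m + c i ≤ y := by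
      rintro _ hy
      obtain ⟨y, hyWY, rfl⟩ := mem_vadd_finset.1 hy
      rw [add_comm m, vadd_eq_add]
      exact add_le_add le_rfl (hW y (mem_inter.1 hyWY).1)
    simpa only [List.map_cons, List.sum_cons, add_assoc] using ih hW' x hx

end Chain

theorem sum_card_sum_erase_add_card_le [Fintype ι] [DecidableEq ι] [AddCommGroup G] [LinearOrder G]
    [IsOrderedAddMonoid G] (A : ι → Finset G) (hA : ∀ i, (A i).Nonempty) :
    ∑ i, #(∑ j ∈ univ.erase i, A j) + #(∑ i, A i) ≤ Fintype.card ι * #(∑ i, A i) + 1 := by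
  set S := ∑ i, A i
  set T := fun i => ∑ j ∈ univ.erase i, A j
  set a := fun i => (A i).min' (hA i)
  set b := fun i => (A i).max' (hA i)
  have hTS (i : ι) : A i + T i = S := by rw [add_comm]; exact sum_erase_add _ _ (mem_univ i)
  have haS (i : ι) : a i +ᵥ T i ⊆ S := hTS i ▸ vadd_finset_subset_add (min'_mem _ _)
  have hbS (i : ι) : (b i - a i) +ᵥ (a i +ᵥ T i) ⊆ S := by
    rw [vadd_vadd, sub_add_cancel]
    exact hTS i ▸ vadd_finset_subset_add (max'_mem _ _)
  set W := translateInterChain (fun i => a i +ᵥ T i) (fun i => b i - a i) univ.toList S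
  have hchain := card_add_sum_card_le_translateInterChain (l := univ.toList)
    (fun i _ => haS i) (fun i _ => hbS i) subset_rfl
  simp only [card_vadd_finset, sum_map_toList, length_toList, card_univ] at hchain
  have hW : #W ≤ 1 := by
    suffices ∀ x ∈ W, x = ∑ i, b i from
      card_le_one.2 fun x hx y hy => (this x hx).trans (this y hy).symm
    intro x hx
    have hx_ge := add_sum_le_of_mem_translateInterChain
      (fun y hy => sum_le_of_mem_sum (f := a) (fun i _ y hy => min'_le _ y hy) hy) x hx
    rw [sum_map_toList, ← sum_add_distrib] at hx_ge
    simp only [add_sub_cancel] at hx_ge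
    have hx_le := le_sum_of_mem_sum (f := b) (fun i _ y hy => le_max' _ y hy)
      (translateInterChain_subset (l := univ.toList) (fun i _ => hbS i) subset_rfl hx)
    exact le_antisymm hx_le hx_ge
  rw [add_comm]
  exact hchain.trans (Nat.add_le_add_left hW _)

end Finset

theorem superadditivity_many_sets_general (k : ℕ) (A : Fin k → Finset ℤ)
    (hA : ∀ i, (A i).Nonempty) :
    (∑ i, (∑ j ∈ Finset.univ.erase i, A j).card) - 1 ≤ (k - 1) * (∑ i, A i).card := by
  have h := sum_card_sum_erase_add_card_le A hA
  rcases k with _ | k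
  · simp
  · rw [Fintype.card_fin, add_mul, one_mul] at h
    rw [Nat.add_sub_cancel]
    omega

theorem superadditivity_many_sets (k : ℕ) (hk : 2 ≤ k) (A : Fin k → Finset ℤ)
    (hA : ∀ i, (A i).Nonempty) :
    (∑ i, (∑ j ∈ Finset.univ.erase i, A j).card) - 1 ≤ (k - 1) * (∑ i, A i).card :=
  superadditivity_many_sets_general k A hA
end

section
/- For finite nonempty sets A, B, C in a commutative semigroup, |A + B + C|² ≤ |A + B| · |B + C| · |A + C|. -/
/-!
Induction on `C`. Adding an element `c` to `C` creates `N` new sums in `A + B + C`, and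
`N ≤ |A + B|` since they lie in `A + B + c`. Moreover a new sum `a + b + c` is determined by
the pair `(a + c, b + c)`, whose coordinates are new elements of `A + C` and of `B + C`, so
`N ≤ x y` where `x`, `y` count those. Hence `N² ≤ |A + B| x y`, and the bounds add up by
Cauchy–Schwarz: `√(k x y) + √(k p q) ≤ √(k (x + p) (y + q))`.
-/

open Pointwise Finset

theorem sq_add_le_mul_add_mul_add {R : Type*} [CommSemiring R] [LinearOrder R]
    [IsStrictOrderedRing R] [ExistsAddOfLE R] {a b k x y p q : R}
    (ha : a ^ 2 ≤ k * x * y) (hb : b ^ 2 ≤ k * p * q) (ha₀ : 0 ≤ a) (hb₀ : 0 ≤ b)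
    (hk : 0 ≤ k) (hx : 0 ≤ x) (hy : 0 ≤ y) (hp : 0 ≤ p) (hq : 0 ≤ q) :
    (a + b) ^ 2 ≤ k * (x + p) * (y + q) := by
  have cross : 2 * a * b ≤ k * (x * q + p * y) := by
    rw [← pow_le_pow_iff_left₀ (by positivity) (by positivity) two_ne_zero]
    calc (2 * a * b) ^ 2 = 4 * a ^ 2 * b ^ 2 := by ring
      _ ≤ 4 * (k * x * y) * (k * p * q) := by gcongr
      _ = k ^ 2 * (4 * (x * q) * (p * y)) := by ring
      _ ≤ k ^ 2 * (x * q + p * y) ^ 2 := by gcongr; exact four_mul_le_sq_add _ _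
      _ = (k * (x * q + p * y)) ^ 2 := by ring
  calc (a + b) ^ 2 = a ^ 2 + 2 * a * b + b ^ 2 := add_sq a b
    _ ≤ k * x * y + k * (x * q + p * y) + k * p * q := by gcongr
    _ = k * (x + p) * (y + q) := by ring

namespace Finset

theorem card_image_le_card_image_of_factors {ι β γ : Type*} [DecidableEq β] [DecidableEq γ]
    {s : Finset ι} {f : ι → β} {g : ι → γ}
    (h : ∀ i ∈ s, ∀ j ∈ s, g i = g j → f i = f j) : #(s.image f) ≤ #(s.image g) := by
  set graph := s.image fun i => (g i, f i)
  calc #(s.image f) = #(graph.image Prod.snd) := by simp [graph, image_image, Function.comp_def]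
    _ ≤ #graph := card_image_le
    _ = #(graph.image Prod.fst) := by
      refine (card_image_of_injOn ?_).symm
      simp only [graph, coe_image, Set.InjOn, Set.mem_image, mem_coe]
      rintro _ ⟨i, hi, rfl⟩ _ ⟨j, hj, rfl⟩ hij
      simp only [Prod.mk.injEq] at hij ⊢
      exact ⟨hij, h i hi j hj hij⟩
    _ = #(s.image g) := by simp [graph, image_image, Function.comp_def]

variable {α : Type*} [AddCommSemigroup α] [DecidableEq α]

theorem card_add_singleton_le (s : Finset α) (a : α) : #(s + {a}) ≤ #s := by
  rw [add_singleton]; exact card_image_le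

theorem card_add_insert (s t : Finset α) (a : α) :
    #(s + insert a t) = #((s + {a}) \ (s + t)) + #(s + t) := by
  rw [insert_eq, add_union, card_sdiff_add_card]

theorem card_add_add_singleton_sdiff_le (A B C : Finset α) (c : α) :
    #((A + B + {c}) \ (A + B + C)) ≤ #((A + {c}) \ (A + C)) * #((B + {c}) \ (B + C)) := by
  set P := (A ×ˢ B).filter fun p => p.1 + p.2 + c ∉ A + B + C
  have hnew : (A + B + {c}) \ (A + B + C) = P.image fun p => p.1 + p.2 + c := by
    ext s
    simp only [P, mem_sdiff, mem_image, mem_filter, mem_product, Prod.exists]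
    constructor
    · rintro ⟨hs, hs'⟩
      obtain ⟨_, hab, _, hc, rfl⟩ := mem_add.1 hs
      obtain rfl := mem_singleton.1 hc
      obtain ⟨a, ha, b, hb, rfl⟩ := mem_add.1 hab
      exact ⟨a, b, ⟨⟨ha, hb⟩, hs'⟩, rfl⟩
    · rintro ⟨a, b, ⟨⟨ha, hb⟩, hs⟩, rfl⟩
      exact ⟨add_mem_add (add_mem_add ha hb) (mem_singleton_self c), hs⟩
  have hfactor : ∀ p ∈ P, ∀ q ∈ P, (p.1 + c, p.2 + c) = (q.1 + c, q.2 + c) →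
      p.1 + p.2 + c = q.1 + q.2 + c := by
    rintro p - q - hpq
    simp only [Prod.mk.injEq] at hpq
    calc p.1 + p.2 + c = p.1 + (p.2 + c) := add_assoc _ _ _
      _ = (p.1 + c) + q.2 := by rw [hpq.2, ← add_assoc, add_right_comm]
      _ = q.1 + q.2 + c := by rw [hpq.1, add_right_comm]
  have hmaps : (P.image fun p => (p.1 + c, p.2 + c)) ⊆
      ((A + {c}) \ (A + C)) ×ˢ ((B + {c}) \ (B + C)) := by
    simp only [P, subset_iff, mem_image, mem_filter, mem_product, mem_sdiff]
    rintro _ ⟨⟨a, b⟩, ⟨⟨ha, hb⟩, hnot⟩, rfl⟩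
    refine ⟨⟨add_mem_add ha (mem_singleton_self c), fun h : a + c ∈ A + C => hnot ?_⟩,
      ⟨add_mem_add hb (mem_singleton_self c), fun h : b + c ∈ B + C => hnot ?_⟩⟩
    · show a + b + c ∈ A + B + C
      obtain ⟨a', ha', c', hc', hac⟩ := mem_add.1 h
      rw [add_right_comm a, ← hac, add_right_comm a']
      exact add_mem_add (add_mem_add ha' hb) hc'
    · show a + b + c ∈ A + B + C
      obtain ⟨b', hb', c', hc', hbc⟩ := mem_add.1 h
      rw [add_assoc a, ← hbc, ← add_assoc]
      exact add_mem_add (add_mem_add ha hb') hc'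
  rw [hnew, ← card_product]
  exact (card_image_le_card_image_of_factors hfactor).trans (card_le_card hmaps)

end Finset

theorem submultiplicativity_three_sets_general {α : Type*} [AddCommSemigroup α] [DecidableEq α]
    (A B C : Finset α) :
    (A + B + C).card ^ 2 ≤ (A + B).card * (B + C).card * (A + C).card := by
  induction C using Finset.induction_on with
  | empty => simp
  | insert c C _ ih =>
    have hnew_sq : #((A + B + {c}) \ (A + B + C)) ^ 2 ≤
        #(A + B) * #((B + {c}) \ (B + C)) * #((A + {c}) \ (A + C)) := by
      rw [sq, mul_assoc]
      exact Nat.mul_le_mul ((card_le_card sdiff_subset).trans (card_add_singleton_le _ _))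
        ((card_add_add_singleton_sdiff_le A B C c).trans_eq (mul_comm _ _))
    rw [card_add_insert, card_add_insert, card_add_insert]
    refine sq_add_le_mul_add_mul_add hnew_sq ih ?_ ?_ ?_ ?_ ?_ ?_ ?_ <;> positivity

theorem submultiplicativity_three_sets {α : Type*} [AddCommSemigroup α] [DecidableEq α]
    (A B C : Finset α) (hA : A.Nonempty) (hB : B.Nonempty) (hC : C.Nonempty) :
    (A + B + C).card ^ 2 ≤ (A + B).card * (B + C).card * (A + C).card :=
  submultiplicativity_three_sets_general A B C
end

section
/- For a finite nonempty set A in a commutative semigroup and integers 1 ≤ i < k, |kA|^{1/k} ≤ |iA|^{1/i}; equivalently |kA|^i ≤ |iA|^k, where kA denotes the k-fold sumset. -/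
/-!
Adjoining a zero turns `kfold A (n - 1)` into the sumset `n • B`, where `B` is the copy of `A` in
the monoid `WithZero α`. Fix any linear order on the monoid and represent each element of `n • B` by the
lexicographically least multiset of `n` elements of `B` summing to it. Deleting an element from a
least representation leaves a least representation, since lexicographic order is compatible with
addition. So the `n + 1`-element least representations all have their `n`-element shadows among the
`n`-element ones, and the Loomis–Whitney inequality, applied to the representations written as
sorted lists, gives `|(n + 1) • B| ^ n ≤ |n • B| ^ (n + 1)`. Chaining these consecutive inequalities
shows that `|n • B| ^ (1 / n)` is antitone.
-/

open Pointwise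

/-- `kfold A n` is the `(n+1)`-fold sumset `A + A + ⋯ + A` (with `n+1` summands). -/
def kfold {α : Type*} [AddCommSemigroup α] [DecidableEq α] (A : Finset α) : ℕ → Finset α
  | 0 => A
  | n + 1 => kfold A n + A

open Finset
open scoped NNReal

namespace NNReal

theorem sum_prod_rpow_le_prod_sum_rpow {ι κ : Type*} (s : Finset ι) (t : Finset κ)
    (f : κ → ι → ℝ≥0) (w : κ → ℝ≥0) (hw : ∑ j ∈ t, w j = 1) :
    ∑ i ∈ s, ∏ j ∈ t, f j i ^ (w j : ℝ) ≤ ∏ j ∈ t, (∑ i ∈ s, f j i) ^ (w j : ℝ) := by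
  set S := fun j => ∑ i ∈ s, f j i
  have hfactor : ∀ i ∈ s, ∏ j ∈ t, f j i ^ (w j : ℝ)
      = (∏ j ∈ t, S j ^ (w j : ℝ)) * ∏ j ∈ t, (f j i / S j) ^ (w j : ℝ) := by
    intro i hi
    rw [← prod_mul_distrib]
    refine prod_congr rfl fun j _ => ?_
    rw [← mul_rpow, mul_div_cancel_of_imp' fun h => (sum_eq_zero_iff.1 h) i hi]
  calc ∑ i ∈ s, ∏ j ∈ t, f j i ^ (w j : ℝ)
      ≤ ∑ i ∈ s, (∏ j ∈ t, S j ^ (w j : ℝ)) * ∑ j ∈ t, w j * (f j i / S j) := by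
        refine sum_le_sum fun i hi => ?_
        rw [hfactor i hi]
        gcongr
        exact geom_mean_le_arith_mean_weighted t w _ hw
    _ = (∏ j ∈ t, S j ^ (w j : ℝ)) * ∑ j ∈ t, w j * (S j / S j) := by
        rw [← mul_sum, sum_comm]
        simp_rw [← mul_sum, ← sum_div]
        rfl
    _ ≤ ∏ j ∈ t, S j ^ (w j : ℝ) := by
        refine mul_le_of_le_one_right' ?_
        calc ∑ j ∈ t, w j * (S j / S j) ≤ ∑ j ∈ t, w j :=
              sum_le_sum fun j _ => mul_le_of_le_one_right' (div_self_le_one _)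
          _ = 1 := hw

end NNReal

theorem sum_pow_card_le_mul_prod_sum {ι κ : Type*} (s : Finset ι) {t : Finset κ} (ht : t.Nonempty)
    (a : ι → ℕ) (P : ℕ) (Q : κ → ι → ℕ) (h : ∀ i ∈ s, a i ^ #t ≤ P * ∏ j ∈ t, Q j i) :
    (∑ i ∈ s, a i) ^ #t ≤ P * ∏ j ∈ t, ∑ i ∈ s, Q j i := by
  have hm : #t ≠ 0 := ht.card_pos.ne'
  set w : ℝ := (#t : ℝ)⁻¹
  have hroot : ∀ i ∈ s, (a i : ℝ≥0) ≤ (P : ℝ≥0) ^ w * ∏ j ∈ t, (Q j i : ℝ≥0) ^ w := by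
    intro i hi
    rw [NNReal.finsetProd_rpow, ← NNReal.mul_rpow, ← NNReal.pow_rpow_inv_natCast (a i : ℝ≥0) hm]
    gcongr
    exact_mod_cast h i hi
  have hsum : (∑ i ∈ s, a i : ℝ≥0) ≤ ((P : ℝ≥0) * ∏ j ∈ t, ∑ i ∈ s, (Q j i : ℝ≥0)) ^ w := by
    calc (∑ i ∈ s, a i : ℝ≥0)
        ≤ ∑ i ∈ s, (P : ℝ≥0) ^ w * ∏ j ∈ t, (Q j i : ℝ≥0) ^ w := sum_le_sum hroot
      _ ≤ (P : ℝ≥0) ^ w * ∏ j ∈ t, (∑ i ∈ s, (Q j i : ℝ≥0)) ^ w := by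
        rw [← mul_sum]
        gcongr
        have := NNReal.sum_prod_rpow_le_prod_sum_rpow s t (fun j i => (Q j i : ℝ≥0))
          (fun _ => (#t : ℝ≥0)⁻¹) (by simp [hm])
        simpa [w] using this
      _ = _ := by rw [NNReal.finsetProd_rpow, NNReal.mul_rpow]
  have := pow_le_pow_left₀ zero_le hsum #t
  rw [NNReal.rpow_inv_natCast_pow _ hm] at this
  exact_mod_cast this

namespace Finset

variable {γ : Type*}

noncomputable def consFiber (F : Finset (List γ)) (t : γ) : Finset (List γ) :=
  F.preimage (List.cons t) List.cons_injective.injOn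

@[simp]
theorem mem_consFiber {F : Finset (List γ)} {t : γ} {L : List γ} :
    L ∈ consFiber F t ↔ t :: L ∈ F := by
  simp [consFiber]

theorem card_le_sum_card_consFiber [DecidableEq γ] {F : Finset (List γ)} (hF : [] ∉ F)
    {T : Finset γ} (hT : ∀ t L, t :: L ∈ F → t ∈ T) : #F ≤ ∑ t ∈ T, #(consFiber F t) := by
  rw [← card_sigma]
  refine card_le_card_of_surjOn (fun p => p.1 :: p.2) ?_
  rintro (_ | ⟨t, L⟩) hL
  · exact absurd hL hF
  · exact ⟨⟨t, L⟩, mem_sigma.2 ⟨hT t L hL, mem_consFiber.2 hL⟩, rfl⟩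

theorem sum_card_consFiber_le (G : Finset (List γ)) (T : Finset γ) :
    ∑ t ∈ T, #(consFiber G t) ≤ #G := by
  rw [← card_sigma]
  refine card_le_card_of_injOn (fun p => p.1 :: p.2) ?_ ?_
  · rintro ⟨t, L⟩ hp
    exact mem_consFiber.1 (mem_sigma.1 hp).2
  · rintro ⟨t, L⟩ - ⟨t', L'⟩ - h
    obtain ⟨rfl, rfl⟩ := List.cons.inj h
    rfl

theorem consFiber_subset_image_eraseIdx_zero [DecidableEq γ] (F : Finset (List γ)) (t : γ) :
    consFiber F t ⊆ F.image (List.eraseIdx · 0) := fun L hL =>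
  mem_image.2 ⟨t :: L, mem_consFiber.1 hL, rfl⟩

theorem image_eraseIdx_consFiber_subset [DecidableEq γ] (F : Finset (List γ)) (t : γ) (j : ℕ) :
    (consFiber F t).image (List.eraseIdx · j) ⊆
      consFiber (F.image (List.eraseIdx · (j + 1))) t := by
  intro L hL
  obtain ⟨L', hL', rfl⟩ := mem_image.1 hL
  exact mem_consFiber.2 (mem_image.2 ⟨t :: L', mem_consFiber.1 hL', List.eraseIdx_cons_succ⟩)

theorem card_pow_le_prod_card_image_eraseIdx [DecidableEq γ] (n : ℕ) {F : Finset (List γ)}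
    (hF : F.Nonempty) (hlen : ∀ L ∈ F, L.length = n + 1) :
    #F ^ n ≤ ∏ j ∈ range (n + 1), #(F.image (List.eraseIdx · j)) := by
  induction n generalizing F with
  | zero => simpa using hF.image (List.eraseIdx · 0)
  | succ n ih =>
    set T := F.biUnion List.toFinset
    have hT : ∀ t L, t :: L ∈ F → t ∈ T := fun t L h => mem_biUnion.2 ⟨_, h, by simp⟩
    have hfiber : ∀ t ∈ T, #(consFiber F t) ^ #(range (n + 1)) ≤ #(F.image (List.eraseIdx · 0)) *
        ∏ j ∈ range (n + 1), #((consFiber F t).image (List.eraseIdx · j)) := by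
      intro t _
      rw [card_range, pow_succ']
      rcases (consFiber F t).eq_empty_or_nonempty with hempty | hne
      · simp [hempty]
      · refine Nat.mul_le_mul (card_le_card (consFiber_subset_image_eraseIdx_zero F t)) (ih hne ?_)
        intro L hL
        simpa using hlen _ (mem_consFiber.1 hL)
    calc #F ^ (n + 1)
        ≤ (∑ t ∈ T, #(consFiber F t)) ^ #(range (n + 1)) := by
          rw [card_range]
          gcongr
          exact card_le_sum_card_consFiber (fun h => by simpa using hlen _ h) hT
      _ ≤ #(F.image (List.eraseIdx · 0)) *
            ∏ j ∈ range (n + 1), ∑ t ∈ T, #((consFiber F t).image (List.eraseIdx · j)) :=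
          sum_pow_card_le_mul_prod_sum T nonempty_range_add_one (fun t => #(consFiber F t)) _
            (fun j t => #((consFiber F t).image (List.eraseIdx · j))) hfiber
      _ ≤ #(F.image (List.eraseIdx · 0)) *
            ∏ j ∈ range (n + 1), #(F.image (List.eraseIdx · (j + 1))) := by
          refine Nat.mul_le_mul_left _ (prod_le_prod (fun _ _ => Nat.zero_le _) fun j _ => ?_)
          exact (sum_le_sum fun t _ => card_le_card (image_eraseIdx_consFiber_subset F t j)).trans
            (sum_card_consFiber_le _ T)
      _ = ∏ j ∈ range (n + 2), #(F.image (List.eraseIdx · j)) := by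
          rw [prod_range_succ' _ (n + 1), mul_comm]

end Finset

theorem Multiset.eraseIdx_sort {γ : Type*} [LinearOrder γ] (M : Multiset γ) {j : ℕ}
    (hj : j < (M.sort (· ≤ ·)).length) :
    (M.sort (· ≤ ·)).eraseIdx j = (M.erase (M.sort (· ≤ ·))[j]).sort (· ≤ ·) := by
  refine List.Perm.eq_of_pairwise' ((M.pairwise_sort _).sublist (List.eraseIdx_sublist _ j))
    (Multiset.pairwise_sort _ _) (Multiset.coe_eq_coe.1 ?_)
  rw [Multiset.sort_eq, ← Multiset.coe_eq_coe.2 (List.erase_getElem hj), ← Multiset.coe_erase,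
    Multiset.sort_eq]

theorem Finset.card_pow_le_card_pow_of_erase_mem {γ : Type*} [LinearOrder γ] {n : ℕ}
    (hn : 0 < n) {F : Finset (Sym γ (n + 1))} {G : Finset (Sym γ n)}
    (hFG : ∀ s ∈ F, ∀ a (ha : a ∈ s), s.erase a ha ∈ G) : #F ^ n ≤ #G ^ (n + 1) := by
  rcases F.eq_empty_or_nonempty with rfl | hF
  · simp [hn.ne']
  let sort : ∀ {m}, Sym γ m → List γ := fun s => (s : Multiset γ).sort (· ≤ ·)
  have hsort_inj : Function.Injective (sort (m := n + 1)) := fun _ _ h =>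
    Sym.coe_injective (by simpa [sort] using congrArg ((↑) : List γ → Multiset γ) h)
  have hproj : ∀ j ∈ range (n + 1), #((F.image sort).image (List.eraseIdx · j)) ≤ #G := by
    intro j hj
    refine (card_le_card ?_).trans (card_image_le (f := sort))
    simp only [subset_iff, mem_image, forall_exists_index, and_imp]
    rintro _ _ s hs rfl rfl
    have hj : j < (sort s).length := by simpa [sort] using hj
    have hmem : (sort s)[j] ∈ s := Sym.mem_coe.1 ((Multiset.mem_sort _).1 (List.getElem_mem hj))
    exact ⟨s.erase _ hmem, hFG s hs _ hmem, by simp [sort, Multiset.eraseIdx_sort _ hj]⟩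
  calc #F ^ n = #(F.image sort) ^ n := by rw [card_image_of_injective _ hsort_inj]
    _ ≤ ∏ j ∈ range (n + 1), #((F.image sort).image (List.eraseIdx · j)) :=
        card_pow_le_prod_card_image_eraseIdx n (hF.image _) (by simp [sort])
    _ ≤ #G ^ (n + 1) := by
        simpa using prod_le_prod (fun _ _ => Nat.zero_le _) hproj

namespace Multiset
variable {β : Type*} [LinearOrder β]

noncomputable def lexKey (M : Multiset β) : Lex (β →₀ ℕ) := toLex (Multiset.toFinsupp M)

theorem lexKey_injective : Function.Injective (lexKey (β := β)) :=
  fun _ _ h => Multiset.toFinsupp.injective (toLex.injective h)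

theorem lexKey_cons (a : β) (M : Multiset β) :
    (a ::ₘ M).lexKey = ({a} : Multiset β).lexKey + M.lexKey := by
  rw [← Multiset.singleton_add]
  exact congrArg toLex (Multiset.toFinsupp_add _ _)

end Multiset

namespace Finset

section Sym
variable {β : Type*} [DecidableEq β] {B : Finset β} {n : ℕ} {a : β}

theorem erase_mem_sym {s : Sym β (n + 1)} (hs : s ∈ B.sym (n + 1)) (ha : a ∈ s) :
    s.erase a ha ∈ B.sym n := by
  rw [mem_sym_iff] at hs ⊢
  intro b hb
  rw [← Sym.mem_coe, Sym.coe_erase] at hb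
  exact hs b (Sym.mem_coe.1 (Multiset.mem_of_mem_erase hb))

theorem cons_mem_sym {s : Sym β n} (ha : a ∈ B) (hs : s ∈ B.sym n) : a ::ₛ s ∈ B.sym (n + 1) := by
  rw [mem_sym_iff] at hs ⊢
  intro b hb
  rcases Sym.mem_cons.1 hb with rfl | hb
  exacts [ha, hs b hb]

theorem image_sum_sym [AddCommMonoid β] (B : Finset β) (n : ℕ) :
    (B.sym n).image (fun s : Sym β n => (s : Multiset β).sum) = n • B := by
  induction n with
  | zero => rw [sym_zero, image_singleton, zero_nsmul]; rfl
  | succ n ih =>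
    ext x
    simp only [mem_image, succ_nsmul, mem_add, ← ih]
    constructor
    · rintro ⟨s, hs, rfl⟩
      obtain ⟨a, ha⟩ := s.exists_mem
      refine ⟨_, ⟨s.erase a ha, erase_mem_sym hs ha, rfl⟩, a, mem_sym_iff.1 hs a ha, ?_⟩
      conv_rhs => rw [← Sym.cons_erase ha]
      rw [Sym.coe_cons, Multiset.sum_cons, add_comm]
    · rintro ⟨_, ⟨s, hs, rfl⟩, b, hb, rfl⟩
      exact ⟨b ::ₛ s, cons_mem_sym hb hs, by rw [Sym.coe_cons, Multiset.sum_cons, add_comm]⟩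

end Sym

variable {β : Type*} [AddCommMonoid β] [LinearOrder β]

noncomputable def minReps (B : Finset β) (n : ℕ) : Finset (Sym β n) :=
  {s ∈ B.sym n | ∀ s' ∈ B.sym n, (s' : Multiset β).sum = (s : Multiset β).sum →
    (s : Multiset β).lexKey ≤ (s' : Multiset β).lexKey}

variable {B : Finset β} {n : ℕ}

theorem mem_minReps {s : Sym β n} :
    s ∈ minReps B n ↔ s ∈ B.sym n ∧ ∀ s' ∈ B.sym n, (s' : Multiset β).sum = (s : Multiset β).sum →
      (s : Multiset β).lexKey ≤ (s' : Multiset β).lexKey :=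
  mem_filter

theorem erase_mem_minReps {s : Sym β (n + 1)} (hs : s ∈ minReps B (n + 1)) {a : β} (ha : a ∈ s) :
    s.erase a ha ∈ minReps B n := by
  obtain ⟨hsB, hmin⟩ := mem_minReps.1 hs
  refine mem_minReps.2 ⟨erase_mem_sym hsB ha, fun s' hs' hsum => ?_⟩
  by_contra! hlt
  have hcons : ((a ::ₛ s' : Sym β (n + 1)) : Multiset β).sum = (s : Multiset β).sum := by
    conv_rhs => rw [← Sym.cons_erase ha]
    simp only [Sym.coe_cons, Multiset.sum_cons, hsum]
  refine (hmin _ (cons_mem_sym (mem_sym_iff.1 hsB a ha) hs') hcons).not_gt ?_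
  conv_rhs => rw [← Sym.cons_erase ha]
  simp only [Sym.coe_cons, Multiset.lexKey_cons]
  exact add_lt_add_right hlt _

theorem sum_injOn_minReps : Set.InjOn (fun s : Sym β n => (s : Multiset β).sum) (minReps B n) := by
  intro s₁ hs₁ s₂ hs₂ hsum
  have h₁ := (mem_minReps.1 hs₁).2 s₂ (mem_minReps.1 hs₂).1 hsum.symm
  have h₂ := (mem_minReps.1 hs₂).2 s₁ (mem_minReps.1 hs₁).1 hsum
  exact Sym.coe_injective (Multiset.lexKey_injective (h₁.antisymm h₂))

theorem image_sum_minReps :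
    (minReps B n).image (fun s : Sym β n => (s : Multiset β).sum) = n • B := by
  rw [← image_sum_sym]
  refine (image_subset_image (filter_subset _ _)).antisymm fun x hx => ?_
  obtain ⟨s, hs, rfl⟩ := mem_image.1 hx
  obtain ⟨s₀, hs₀, hmin⟩ := exists_min_image
    ((B.sym n).filter fun s' : Sym β n => (s' : Multiset β).sum = (s : Multiset β).sum)
    (fun s' : Sym β n => (s' : Multiset β).lexKey) ⟨s, mem_filter.2 ⟨hs, rfl⟩⟩
  obtain ⟨hs₀B, hs₀sum⟩ := mem_filter.1 hs₀
  refine mem_image.2 ⟨s₀, mem_minReps.2 ⟨hs₀B, fun s' hs' hsum => ?_⟩, hs₀sum⟩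
  exact hmin s' (mem_filter.2 ⟨hs', hsum.trans hs₀sum⟩)

theorem card_minReps : #(minReps B n) = #(n • B) := by
  rw [← image_sum_minReps, card_image_of_injOn sum_injOn_minReps]

variable (B) in
theorem card_nsmul_succ_pow_le (hn : 0 < n) :
    #((n + 1) • B) ^ n ≤ #(n • B) ^ (n + 1) := by
  rw [← card_minReps, ← card_minReps]
  exact card_pow_le_card_pow_of_erase_mem hn fun s hs a ha => erase_mem_minReps hs ha

end Finset

theorem pow_le_pow_of_forall_succ_pow_le {a : ℕ → ℕ}
    (h : ∀ n, 0 < n → a (n + 1) ^ n ≤ a n ^ (n + 1)) {i k : ℕ} (hi : 0 < i) (hik : i ≤ k) :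
    a k ^ i ≤ a i ^ k := by
  induction k, hik using Nat.le_induction with
  | base => exact le_rfl
  | succ k hik ih =>
    have hk : 0 < k := hi.trans_le hik
    refine (Nat.pow_le_pow_iff_left hk.ne').1 ?_
    calc (a (k + 1) ^ i) ^ k = (a (k + 1) ^ k) ^ i := pow_right_comm _ _ _
      _ ≤ (a k ^ (k + 1)) ^ i := Nat.pow_le_pow_left (h k hk) i
      _ = (a k ^ i) ^ (k + 1) := pow_right_comm _ _ _
      _ ≤ (a i ^ k) ^ (k + 1) := Nat.pow_le_pow_left ih _
      _ = (a i ^ (k + 1)) ^ k := pow_right_comm _ _ _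

theorem Finset.card_nsmul_pow_le_card_nsmul_pow {β : Type*} [AddCommMonoid β] [DecidableEq β]
    (B : Finset β) {i k : ℕ} (hi : 0 < i) (hik : i ≤ k) : #(k • B) ^ i ≤ #(i • B) ^ k := by
  let : LinearOrder β := IsWellOrder.linearOrder WellOrderingRel
  refine pow_le_pow_of_forall_succ_pow_le (a := fun n => #(n • B)) (fun n hn => ?_) hi hik
  -- the order brings its own `DecidableEq β`, which `convert` identifies with the given one
  convert card_nsmul_succ_pow_le B hn

theorem image_coe_kfold {α : Type*} [AddCommSemigroup α] [DecidableEq α] (A : Finset α) (n : ℕ) :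
    (kfold A n).image ((↑) : α → WithZero α) = (n + 1) • A.image (↑) := by
  induction n with
  | zero => rw [zero_add, one_nsmul]; rfl
  | succ n ih =>
    rw [kfold, succ_nsmul _ (n + 1), ← ih]
    exact image_add WithZero.coeAddHom

theorem card_kfold {α : Type*} [AddCommSemigroup α] [DecidableEq α] (A : Finset α) (n : ℕ) :
    #(kfold A n) = #((n + 1) • A.image ((↑) : α → WithZero α)) := by
  rw [← image_coe_kfold, card_image_of_injective _ WithZero.coe_injective]

theorem kfold_card_root_antitone_general {α : Type*} [AddCommSemigroup α] [DecidableEq α]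
    (A : Finset α) (i k : ℕ) (hi : 1 ≤ i) (hik : i < k) :
    (kfold A (k - 1)).card ^ i ≤ (kfold A (i - 1)).card ^ k := by
  rw [card_kfold, card_kfold, Nat.sub_add_cancel (hi.trans hik.le), Nat.sub_add_cancel hi]
  exact card_nsmul_pow_le_card_nsmul_pow _ hi hik.le

theorem kfold_card_root_antitone {α : Type*} [AddCommSemigroup α] [DecidableEq α]
    (A : Finset α) (hA : A.Nonempty) (i k : ℕ) (hi : 1 ≤ i) (hik : i < k) :
    (kfold A (k - 1)).card ^ i ≤ (kfold A (i - 1)).card ^ k :=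
  kfold_card_root_antitone_general A i k hi hik
end

section
/- Let d ≥ 2 and let B be a finite subset of a Cartesian product X₁ × ⋯ × X_d. For each i let B_i be the projection of B onto the product of coordinates omitting the i-th coordinate. Then |B|^{d−1} ≤ ∏_{i=1}^d |B_i| (the Loomis–Whitney / Han projection inequality). -/
/-!
Induction on the number of coordinates along which `B` varies. Slice `B` along one such
coordinate `a` into the fibres `B_x = {f ∈ B | f a = x}`. Each fibre injects into the projection
forgetting `a`, and the induction hypothesis bounds `|B_x| ^ (m - 1)` by the product of the
projections of `B_x` forgetting the other `m` coordinates `i`. These projections keep coordinate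
`a`, so for fixed `i` they partition the projection of `B`; summing over `x` with Hölder's
inequality (all exponents `1 / m`) closes the induction.
-/

open Finset MeasureTheory
open scoped ENNReal

theorem ENNReal.sum_prod_rpow_le_prod_rpow_sum {ι κ : Type*} (s : Finset ι) (t : Finset κ)
    (f : ι → κ → ℝ≥0∞) {p : ι → ℝ} (hp : ∑ i ∈ s, p i = 1) (h2p : ∀ i ∈ s, 0 ≤ p i) :
    ∑ x ∈ t, ∏ i ∈ s, f i x ^ p i ≤ ∏ i ∈ s, (∑ x ∈ t, f i x) ^ p i := by
  let _ : MeasurableSpace κ := ⊤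
  have : DiscreteMeasurableSpace κ := ⟨fun _ => trivial⟩
  simpa [lintegral_finset] using ENNReal.lintegral_prod_norm_pow_le
    (μ := Measure.count.restrict (t : Set κ)) s (fun i _ => measurable_from_top.aemeasurable) hp h2p

theorem ENNReal.sum_pow_card_le_mul_prod {ι κ : Type*} {s : Finset ι} (hs : s.Nonempty)
    (t : Finset κ) {b : κ → ℝ≥0∞} {f : ι → κ → ℝ≥0∞} {L : ℝ≥0∞} {A : ι → ℝ≥0∞}
    (hb : ∀ x ∈ t, b x ^ #s ≤ L * ∏ i ∈ s, f i x) (hf : ∀ i ∈ s, ∑ x ∈ t, f i x ≤ A i) :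
    (∑ x ∈ t, b x) ^ #s ≤ L * ∏ i ∈ s, A i := by
  have hm : (0 : ℝ) < #s := by exact_mod_cast hs.card_pos
  have hr : (0 : ℝ) ≤ (#s : ℝ)⁻¹ := by positivity
  rw [← rpow_natCast, ← le_rpow_inv_iff hm]
  calc ∑ x ∈ t, b x
      ≤ ∑ x ∈ t, (L * ∏ i ∈ s, f i x) ^ (#s : ℝ)⁻¹ :=
        sum_le_sum fun x hx => (le_rpow_inv_iff hm).2 (by rw [rpow_natCast]; exact hb x hx)
    _ = L ^ (#s : ℝ)⁻¹ * ∑ x ∈ t, ∏ i ∈ s, f i x ^ (#s : ℝ)⁻¹ := by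
        simp only [mul_rpow_of_nonneg _ _ hr, prod_rpow_of_nonneg hr, mul_sum]
    _ ≤ L ^ (#s : ℝ)⁻¹ * ∏ i ∈ s, (∑ x ∈ t, f i x) ^ (#s : ℝ)⁻¹ := by
        gcongr
        refine sum_prod_rpow_le_prod_rpow_sum s t f ?_ fun _ _ => hr
        rw [sum_const, nsmul_eq_mul, mul_inv_cancel₀ hm.ne']
    _ ≤ L ^ (#s : ℝ)⁻¹ * ∏ i ∈ s, A i ^ (#s : ℝ)⁻¹ := by
        gcongr with i hi
        exact hf i hi
    _ = (L * ∏ i ∈ s, A i) ^ (#s : ℝ)⁻¹ := by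
        rw [mul_rpow_of_nonneg _ _ hr, prod_rpow_of_nonneg hr]

namespace Finset

theorem sum_card_image_filter_eq_card_image {α β γ : Type*} [DecidableEq β] [DecidableEq γ]
    (B : Finset α) (φ : α → β) {c : α → γ} {c' : β → γ} (h : ∀ a, c' (φ a) = c a) :
    ∑ y ∈ B.image c, #((B.filter (c · = y)).image φ) = #(B.image φ) := by
  rw [card_eq_sum_card_image c' (B.image φ), image_image]
  simp only [Function.comp_def, h, filter_image]

section Projection

variable {ι : Type*} [Fintype ι] [DecidableEq ι] {X : ι → Type*} [∀ i, DecidableEq (X i)]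

theorem card_filter_apply_eq_le_card_image_domRestrict_compl (B : Finset (∀ i, X i)) (i : ι)
    (x : X i) : #(B.filter (· i = x)) ≤ #(B.image ({i}ᶜ : Set ι).domRestrict) := by
  refine card_le_card_of_injOn _ (fun f hf => mem_image_of_mem _ (mem_filter.1 hf).1) ?_
  intro f hf g hg hfg
  funext j
  by_cases hj : j = i
  · subst hj
    rw [(mem_filter.1 hf).2, (mem_filter.1 hg).2]
  · exact congrFun hfg ⟨j, hj⟩

theorem card_pow_le_prod_card_image_domRestrict_compl {s : Finset ι} (hs : s.Nonempty)
    {B : Finset (∀ i, X i)} (hB : B.Nonempty) (hBs : ∀ f ∈ B, ∀ g ∈ B, ∀ j ∉ s, f j = g j) :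
    #B ^ (#s - 1) ≤ ∏ i ∈ s, #(B.image ({i}ᶜ : Set ι).domRestrict) := by
  induction hs using Finset.Nonempty.cons_induction generalizing B with
  | singleton a => simpa using hB.image ({a}ᶜ : Set ι).domRestrict
  | cons a s ha hs ih =>
    set T := B.image fun f : (∀ i, X i) => f a
    set fiber : X a → Finset (∀ i, X i) := fun x => B.filter (· a = x)
    have hfiber x (hx : x ∈ T) : #(fiber x) ^ (#s - 1) ≤
        ∏ i ∈ s, #((fiber x).image ({i}ᶜ : Set ι).domRestrict) := by
      refine ih (fiber_nonempty_iff_mem_image.2 hx) fun f hf g hg j hj => ?_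
      rw [mem_filter] at hf hg
      by_cases hja : j = a
      · subst hja
        rw [hf.2, hg.2]
      · exact hBs f hf.1 g hg.1 j (by simp [hja, hj])
    have hpow x (hx : x ∈ T) : #(fiber x) ^ #s ≤
        #(B.image ({a}ᶜ : Set ι).domRestrict) *
          ∏ i ∈ s, #((fiber x).image ({i}ᶜ : Set ι).domRestrict) := by
      have := Nat.mul_le_mul (card_filter_apply_eq_le_card_image_domRestrict_compl B a x)
        (hfiber x hx)
      rwa [← pow_succ', Nat.sub_add_cancel hs.card_pos] at this
    have hsum i (hi : i ∈ s) : ∑ x ∈ T, #((fiber x).image ({i}ᶜ : Set ι).domRestrict) =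
        #(B.image ({i}ᶜ : Set ι).domRestrict) :=
      sum_card_image_filter_eq_card_image B _
        (c' := fun g => g ⟨a, (ne_of_mem_of_not_mem hi ha).symm⟩) fun _ => rfl
    have hB_card : #B = ∑ x ∈ T, #(fiber x) := card_eq_sum_card_image _ B
    rw [card_cons, Nat.add_sub_cancel, prod_cons, hB_card]
    have := ENNReal.sum_pow_card_le_mul_prod hs T (b := fun x => #(fiber x))
      (f := fun i x => #((fiber x).image ({i}ᶜ : Set ι).domRestrict))
      (L := #(B.image ({a}ᶜ : Set ι).domRestrict))
      (A := fun i => #(B.image ({i}ᶜ : Set ι).domRestrict))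
      (fun x hx => by exact_mod_cast hpow x hx) fun i hi => by exact_mod_cast (hsum i hi).le
    exact_mod_cast this

end Projection

end Finset

theorem Fin.card_image_removeNth {n : ℕ} {X : Fin (n + 1) → Type*} [∀ i, DecidableEq (X i)]
    (B : Finset (∀ j, X j)) (i : Fin (n + 1)) :
    #(B.image (Fin.removeNth i)) = #(B.image ({i}ᶜ : Set (Fin (n + 1))).domRestrict) := by
  let e (g : ∀ j : ↥({i}ᶜ : Set (Fin (n + 1))), X j) (j : Fin n) : X (i.succAbove j) :=
    g ⟨i.succAbove j, i.succAbove_ne j⟩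
  have he : e.Injective := fun g h hgh => funext fun ⟨j, hj⟩ => by
    obtain ⟨k, rfl⟩ := Fin.exists_succAbove_eq hj
    exact congrFun hgh k
  rw [← card_image_of_injective _ he, image_image]
  rfl

theorem projection_inequality (n : ℕ) (X : Fin (n + 2) → Type*)
    [∀ i, DecidableEq (X i)] (B : Finset (∀ i, X i)) :
    B.card ^ (n + 1) ≤
      ∏ i : Fin (n + 2),
        (B.image fun f => fun j : Fin (n + 1) => f (i.succAbove j)).card := by
  obtain rfl | hB := B.eq_empty_or_nonempty
  · simp
  have h := card_pow_le_prod_card_image_domRestrict_compl univ_nonempty hB (by simp)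
  simp only [card_univ, Fintype.card_fin, ← Fin.card_image_removeNth] at h
  exact h
end

section
/- Let A, B₁, B₂ be finite nonempty sets in a commutative group and let S ⊆ B₁ + B₂ be nonempty. Then |S + A|² ≤ |S| · |A + B₁| · |A + B₂|. -/
/-!
Write each `x ∈ S + A` as `x = s + a` with `s ∈ S`, `a ∈ A`, and each `s ∈ S` as `s = b₁ + b₂`.
The map `x ↦ a + b₁ = x - b₂` sends `S + A` into `A + B₁`, so by Cauchy–Schwarz
`|S + A|² ≤ |A + B₁| · N`, where `N` counts the pairs `(x, y)` in `(S + A)²` with equal images.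
Such a pair is determined by `(s(x), y - b₁(s(x)))`, and `y - b₁(s(x)) = a(x) + b₂(s(y)) ∈ A + B₂`,
so `N ≤ |S| · |A + B₂|`.
-/

open Pointwise Finset

theorem card_sq_le_card_mul_card_filter_eq {α β : Type*} [DecidableEq β] {f : α → β}
    {T : Finset α} {U : Finset β} (hf : Set.MapsTo f T U) :
    #T ^ 2 ≤ #U * #{z ∈ T ×ˢ T | f z.1 = f z.2} := by
  have hfiber (c : β) :
      #{z ∈ {z ∈ T ×ˢ T | f z.1 = f z.2} | f z.1 = c} = #{x ∈ T | f x = c} ^ 2 := by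
    rw [sq, ← card_product, ← filter_product, filter_filter]
    congr 1
    refine filter_congr fun z _ => ⟨?_, ?_⟩
    · rintro ⟨h, rfl⟩
      exact ⟨rfl, h.symm⟩
    · rintro ⟨h₁, h₂⟩
      exact ⟨h₁.trans h₂.symm, h₁⟩
  calc #T ^ 2 = (∑ c ∈ U, #{x ∈ T | f x = c}) ^ 2 := by rw [card_eq_sum_card_fiberwise hf]
    _ ≤ #U * ∑ c ∈ U, #{x ∈ T | f x = c} ^ 2 := sq_sum_le_card_mul_sum_sq
    _ = #U * #{z ∈ T ×ˢ T | f z.1 = f z.2} := by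
      simp_rw [← hfiber]
      rw [← card_eq_sum_card_fiberwise fun z hz => hf (mem_product.1 (mem_filter.1 hz).1).1]

section AddCommGroup

variable {G : Type*} [AddCommGroup G]

theorem Finset.exists_mem_sub_mem_of_mem_add [DecidableEq G] {s t : Finset G} {x : G}
    (hx : x ∈ s + t) : ∃ a ∈ s, x - a ∈ t := by
  obtain ⟨a, ha, b, hb, rfl⟩ := mem_add.1 hx
  exact ⟨a, ha, by rwa [add_sub_cancel_left]⟩

def replaceSummand (σ β : G → G) (x : G) : G :=
  x - σ x + β (σ x)

variable [DecidableEq G] {A B₁ B₂ S T : Finset G} {σ β : G → G}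

theorem mapsTo_replaceSummand (hσ : ∀ x ∈ T, σ x ∈ S ∧ x - σ x ∈ A)
    (hβ : ∀ s ∈ S, β s ∈ B₁) :
    Set.MapsTo (replaceSummand σ β) T (A + B₁ : Finset G) := fun x hx =>
  add_mem_add (hσ x hx).2 (hβ _ (hσ x hx).1)

theorem card_filter_replaceSummand_eq_le (hσ : ∀ x ∈ T, σ x ∈ S ∧ x - σ x ∈ A)
    (hβ : ∀ s ∈ S, s - β s ∈ B₂) :
    #{z ∈ T ×ˢ T | replaceSummand σ β z.1 = replaceSummand σ β z.2} ≤ #S * #(A + B₂) := by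
  rw [← card_product]
  refine card_le_card_of_injOn (fun z => (σ z.1, z.2 - β (σ z.1))) ?_ ?_
  · rintro ⟨x, y⟩ hz
    rw [mem_coe, mem_filter, mem_product] at hz
    obtain ⟨⟨hx, hy⟩, hxy⟩ := hz
    have hsplit : y - β (σ x) = (x - σ x) + (σ y - β (σ y)) := by grind [replaceSummand]
    have hmem : y - β (σ x) ∈ A + B₂ := hsplit ▸ add_mem_add (hσ _ hx).2 (hβ _ (hσ _ hy).1)
    exact mem_product.2 ⟨(hσ _ hx).1, hmem⟩
  · rintro ⟨x, y⟩ hz ⟨x', y'⟩ hz' h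
    rw [mem_coe, mem_filter] at hz hz'
    simp only [Prod.mk.injEq] at h
    obtain ⟨hσx, rfl⟩ : σ x = σ x' ∧ y = y' := ⟨h.1, by simpa [h.1] using h.2⟩
    have hxx' := hz.2.trans hz'.2.symm
    rw [replaceSummand, replaceSummand, hσx] at hxx'
    simpa using hxx'

end AddCommGroup

theorem restricted_sum_inequality_general {G : Type*} [AddCommGroup G] [DecidableEq G]
    (A B₁ B₂ S : Finset G) (hSB : S ⊆ B₁ + B₂) :
    (S + A).card ^ 2 ≤ S.card * (A + B₁).card * (A + B₂).card := by
  choose! σ hσ using fun x (hx : x ∈ S + A) => exists_mem_sub_mem_of_mem_add hx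
  choose! β hβ₁ hβ₂ using fun s (hs : s ∈ S) => exists_mem_sub_mem_of_mem_add (hSB hs)
  calc #(S + A) ^ 2
      ≤ #(A + B₁) * #{z ∈ (S + A) ×ˢ (S + A) | replaceSummand σ β z.1 = replaceSummand σ β z.2} :=
        card_sq_le_card_mul_card_filter_eq (mapsTo_replaceSummand hσ hβ₁)
    _ ≤ #(A + B₁) * (#S * #(A + B₂)) :=
        Nat.mul_le_mul_left _ (card_filter_replaceSummand_eq_le hσ hβ₂)
    _ = #S * #(A + B₁) * #(A + B₂) := by ring

theorem restricted_sum_inequality {G : Type*} [AddCommGroup G] [DecidableEq G]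
    (A B₁ B₂ S : Finset G) (hA : A.Nonempty) (hB₁ : B₁.Nonempty) (hB₂ : B₂.Nonempty)
    (hS : S.Nonempty) (hSB : S ⊆ B₁ + B₂) :
    (S + A).card ^ 2 ≤ S.card * (A + B₁).card * (A + B₂).card :=
  restricted_sum_inequality_general A B₁ B₂ S hSB
end

section
/- Let A, B₁, …, B_h be finite nonempty sets in a commutative group with |A| = m and |A + B_i| = α_i m for each i. Then there exists a nonempty subset X ⊆ A such that |X + B₁ + ⋯ + B_h| ≤ α₁ α₂ ⋯ α_h |X| (Plünnecke–Ruzsa inequality for different summands). -/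
open Pointwise Finset


section SumLemmas
variable {G : Type*} [AddCommGroup G] [DecidableEq G]

lemma mem_finsetSum_of {ι : Type*} (s : Finset ι) (F : ι → Finset G) (g : ι → G)
    (hg : ∀ i ∈ s, g i ∈ F i) : ∑ i ∈ s, g i ∈ ∑ i ∈ s, F i := by
  induction s using Finset.cons_induction with
  | empty => simpa using Finset.zero_mem_zero
  | cons a s ha ih =>
      rw [Finset.sum_cons, Finset.sum_cons]
      exact add_mem_add (hg a (Finset.mem_cons_self _ _))
        (ih fun i hi => hg i (Finset.mem_cons.2 (Or.inr hi)))

lemma exists_rep_of_mem_finsetSum {ι : Type*} [DecidableEq ι] (s : Finset ι) (F : ι → Finset G)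
    {x : G} (hx : x ∈ ∑ i ∈ s, F i) :
    ∃ g : ι → G, (∀ i ∈ s, g i ∈ F i) ∧ x = ∑ i ∈ s, g i := by
  induction s using Finset.cons_induction generalizing x with
  | empty =>
      refine ⟨fun _ => 0, by simp, ?_⟩
      simpa [Finset.mem_zero] using hx
  | cons a s ha ih =>
      rw [Finset.sum_cons] at hx
      obtain ⟨y, hy, z, hz, hyz⟩ := Finset.mem_add.1 hx
      obtain ⟨g, hg, rfl⟩ := ih hz
      refine ⟨Function.update g a y, ?_, ?_⟩
      · intro i hi
        rcases Finset.mem_cons.1 hi with rfl | hi'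
        · simpa using hy
        · rw [Function.update_of_ne (ne_of_mem_of_not_mem hi' ha)]
          exact hg i hi'
      · rw [Finset.sum_cons, Function.update_self, ← hyz]
        congr 1
        exact (Finset.sum_congr rfl fun i hi =>
          Function.update_of_ne (ne_of_mem_of_not_mem hi ha) _ _).symm

lemma finsetSum_nonempty {ι : Type*} (s : Finset ι) (F : ι → Finset G)
    (hF : ∀ i ∈ s, (F i).Nonempty) : (∑ i ∈ s, F i).Nonempty := by
  induction s using Finset.cons_induction with
  | empty => simpa using ⟨(0 : G), Finset.zero_mem_zero⟩
  | cons a s ha ih =>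
      rw [Finset.sum_cons]
      exact (hF a (Finset.mem_cons_self _ _)).add (ih fun i hi => hF i (Finset.mem_cons.2 (Or.inr hi)))

lemma finsetSum_subset_finsetSum {ι : Type*} (s : Finset ι) (F F' : ι → Finset G)
    (h : ∀ i ∈ s, F i ⊆ F' i) : ∑ i ∈ s, F i ⊆ ∑ i ∈ s, F' i := by
  induction s using Finset.cons_induction with
  | empty => simp
  | cons a s ha ih =>
      rw [Finset.sum_cons, Finset.sum_cons]
      exact Finset.add_subset_add (h a (Finset.mem_cons_self _ _))
        (ih fun i hi => h i (Finset.mem_cons.2 (Or.inr hi)))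

lemma piFinset_finsetSum {ι κ : Type*} (s : Finset ι) [Fintype κ] [DecidableEq κ]
    (F : ι → κ → Finset G) :
    ∑ j ∈ s, Fintype.piFinset (F j) = Fintype.piFinset (fun c => ∑ j ∈ s, F j c) := by
  induction s using Finset.cons_induction with
  | empty =>
      ext f
      simp [Fintype.mem_piFinset, Finset.mem_zero, funext_iff]
  | cons a s ha ih =>
      simp only [Finset.sum_cons]
      rw [ih, ← Fintype.piFinset_add]

end SumLemmas


section Min
variable {G : Type*} [AddCommGroup G] [DecidableEq G]

lemma exists_good_min (A S : Finset G) (hA : A.Nonempty) :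
    ∃ X, X ⊆ A ∧ X.Nonempty ∧
      ∀ Y ⊆ A, (X + S).card * Y.card ≤ (Y + S).card * X.card := by
  obtain ⟨X, hX, hmin⟩ := Finset.exists_min_image (A.powerset.erase ∅)
    (fun Y => ((Y + S).card : ℚ) / Y.card)
    ⟨A, Finset.mem_erase_of_ne_of_mem hA.ne_empty (Finset.mem_powerset_self _)⟩
  rw [Finset.mem_erase, Finset.mem_powerset, ← Finset.nonempty_iff_ne_empty] at hX
  refine ⟨X, hX.2, hX.1, ?_⟩
  intro Y hY
  rcases Y.eq_empty_or_nonempty with rfl | hYne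
  · simp
  have hXc : (0 : ℚ) < X.card := by exact_mod_cast hX.1.card_pos
  have hYc : (0 : ℚ) < Y.card := by exact_mod_cast hYne.card_pos
  have := hmin Y (Finset.mem_erase_of_ne_of_mem hYne.ne_empty (Finset.mem_powerset.2 hY))
  rw [div_le_div_iff₀ hXc hYc] at this
  exact_mod_cast this

lemma petridis_iter (X S : Finset G) (hX : X.Nonempty)
    (hmin : ∀ Y ⊆ X, (X + S).card * Y.card ≤ (Y + S).card * X.card) (n : ℕ) :
    ((X + n • S).card : ℝ) * (X.card : ℝ) ^ n ≤ ((X + S).card : ℝ) ^ n * X.card := by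
  induction n with
  | zero => simp
  | succ n ih =>
      have hXc : (0 : ℝ) < X.card := by exact_mod_cast hX.card_pos
      have hstep := Finset.pluennecke_petridis_inequality_add (n • S) hmin
      -- hstep : (X + S + n • S).card * X.card ≤ (X + S).card * (X + n • S).card
      have hre : X + (n + 1) • S = X + S + n • S := by
        rw [succ_nsmul, ← add_assoc, add_right_comm]
      have hstep' : ((X + (n+1) • S).card : ℝ) * X.card ≤ ((X + S).card : ℝ) * (X + n • S).card := by
        rw [hre]; rw [add_comm (n • S) X, add_right_comm X (n • S) S] at hstep; exact_mod_cast hstep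
      calc ((X + (n+1) • S).card : ℝ) * (X.card : ℝ) ^ (n+1)
          = ((X + (n+1) • S).card : ℝ) * X.card * (X.card : ℝ) ^ n := by ring
        _ ≤ ((X + S).card : ℝ) * (X + n • S).card * (X.card : ℝ) ^ n := by
            apply mul_le_mul_of_nonneg_right hstep' (by positivity)
        _ = ((X + S).card : ℝ) * ((X + n • S).card * (X.card : ℝ) ^ n) := by ring
        _ ≤ ((X + S).card : ℝ) * (((X + S).card : ℝ) ^ n * X.card) := by
            apply mul_le_mul_of_nonneg_left ih (by positivity)
        _ = ((X + S).card : ℝ) ^ (n+1) * X.card := by ring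

end Min


section Prod
variable {G H : Type*} [AddCommGroup G] [DecidableEq G] [AddCommGroup H] [DecidableEq H]

lemma prod_ratio (A S : Finset G) (B T : Finset H) (hS : S.Nonempty) (ρ τ : ℝ)
    (hρ : 0 ≤ ρ) (hτ : 0 ≤ τ)
    (hG : ∀ Y ⊆ A, ρ * Y.card ≤ ((Y + S).card : ℝ))
    (hH : ∀ Z ⊆ B, τ * Z.card ≤ ((Z + T).card : ℝ)) :
    ∀ W ⊆ A ×ˢ B, ρ * τ * W.card ≤ ((W + S ×ˢ T).card : ℝ) := by
  classical
  intro W hW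
  obtain ⟨s₀, hs₀⟩ := hS
  set V := W + S ×ˢ T with hV
  set J := V.image Prod.snd with hJ
  set Gnd := W.image Prod.fst with hGnd
  set U : H → Finset G := fun u => Gnd.filter (fun g => ∃ t ∈ T, (g, u - t) ∈ W) with hU
  have hUA : ∀ u, U u ⊆ A := by
    intro u g hg
    obtain ⟨p, hp, rfl⟩ := Finset.mem_image.1 (Finset.mem_of_mem_filter g hg)
    exact (Finset.mem_product.1 (hW hp)).1
  -- each fiber of V over u ∈ J contains a copy of U u + S
  have hfiber : ∀ u, ((U u + S).card : ℝ) ≤ ((V.filter (fun p => p.2 = u)).card : ℝ) := by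
    intro u
    have hinj : Function.Injective (fun g : G => (g, u)) := by
      intro a b hab; simpa using congrArg Prod.fst hab
    have hsub : (U u + S).image (fun g => (g, u)) ⊆ V.filter (fun p => p.2 = u) := by
      intro p hp
      obtain ⟨g', hg', rfl⟩ := Finset.mem_image.1 hp
      obtain ⟨g, hg, s, hs, rfl⟩ := Finset.mem_add.1 hg'
      obtain ⟨t, ht, hgw⟩ := (Finset.mem_filter.1 hg).2
      refine Finset.mem_filter.2 ⟨?_, rfl⟩
      have hmem : ((g + s : G), u) = ((g, u - t) : G × H) + ((s, t) : G × H) := by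
        simp [Prod.ext_iff]
      rw [hmem]
      exact Finset.add_mem_add hgw (Finset.mem_product.2 ⟨hs, ht⟩)
    calc ((U u + S).card : ℝ) = (((U u + S).image (fun g => (g, u))).card : ℝ) := by
          rw [Finset.card_image_of_injective _ hinj]
      _ ≤ _ := by exact_mod_cast Finset.card_le_card hsub
  -- transpose double counting
  have htrans : τ * (W.card : ℝ) ≤ ∑ u ∈ J, ((U u).card : ℝ) := by
    have hswap : ∑ u ∈ J, (U u).card = ∑ g ∈ Gnd, (J.filter (fun u => ∃ t ∈ T, (g, u - t) ∈ W)).card := by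
      simp only [hU, Finset.card_filter]
      rw [Finset.sum_comm]
    have hg_bound : ∀ g ∈ Gnd, τ * (((W.filter (fun p => p.1 = g)).image Prod.snd).card : ℝ)
        ≤ ((J.filter (fun u => ∃ t ∈ T, (g, u - t) ∈ W)).card : ℝ) := by
      intro g hg
      set Tg := (W.filter (fun p => p.1 = g)).image Prod.snd with hTg
      have hTgB : Tg ⊆ B := by
        intro b hb
        obtain ⟨p, hp, rfl⟩ := Finset.mem_image.1 hb
        exact (Finset.mem_product.1 (hW (Finset.mem_of_mem_filter p hp))).2
      have hsub2 : Tg + T ⊆ J.filter (fun u => ∃ t ∈ T, (g, u - t) ∈ W) := by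
        intro u hu
        obtain ⟨b, hb, t, ht, rfl⟩ := Finset.mem_add.1 hu
        obtain ⟨p, hp, hps⟩ := Finset.mem_image.1 hb
        have hp1 : p.1 = g := (Finset.mem_filter.1 hp).2
        have hpw : ((g, b) : G × H) ∈ W := by
          have := Finset.mem_of_mem_filter p hp
          rwa [show ((g,b) : G × H) = p by rw [← hp1, ← hps]]
        refine Finset.mem_filter.2 ⟨?_, ?_⟩
        · exact Finset.mem_image.2 ⟨((g, b) : G × H) + ((s₀, t) : G × H),
            Finset.add_mem_add hpw (Finset.mem_product.2 ⟨hs₀, ht⟩), rfl⟩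
        · exact ⟨t, ht, by simpa [add_sub_cancel_right] using hpw⟩
      calc τ * (Tg.card : ℝ) ≤ ((Tg + T).card : ℝ) := hH Tg hTgB
        _ ≤ _ := by exact_mod_cast Finset.card_le_card hsub2
    have hWdecomp : (W.card : ℝ) = ∑ g ∈ Gnd, (((W.filter (fun p => p.1 = g)).image Prod.snd).card : ℝ) := by
      have h1 : W.card = ∑ g ∈ Gnd, (W.filter (fun p => p.1 = g)).card :=
        Finset.card_eq_sum_card_fiberwise (fun p hp => Finset.mem_image_of_mem _ hp)
      have h2 : ∀ g, (W.filter (fun p => p.1 = g)).card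
          = ((W.filter (fun p => p.1 = g)).image Prod.snd).card := by
        intro g
        rw [Finset.card_image_of_injOn]
        intro p hp q hq hpq
        have hp1 : p.1 = g := (Finset.mem_filter.1 hp).2
        have hq1 : q.1 = g := (Finset.mem_filter.1 hq).2
        exact Prod.ext (hp1.trans hq1.symm) hpq
      rw [h1]; push_cast; exact Finset.sum_congr rfl fun g _ => by rw [h2]
    calc τ * (W.card : ℝ) = ∑ g ∈ Gnd, τ * (((W.filter (fun p => p.1 = g)).image Prod.snd).card : ℝ) := by
          rw [hWdecomp, Finset.mul_sum]
      _ ≤ ∑ g ∈ Gnd, ((J.filter (fun u => ∃ t ∈ T, (g, u - t) ∈ W)).card : ℝ) :=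
          Finset.sum_le_sum hg_bound
      _ = ∑ u ∈ J, ((U u).card : ℝ) := by exact_mod_cast congrArg Nat.cast hswap.symm
  -- combine
  have hVcard : (V.card : ℝ) = ∑ u ∈ J, ((V.filter (fun p => p.2 = u)).card : ℝ) := by
    have := Finset.card_eq_sum_card_fiberwise
      (f := Prod.snd) (s := V) (t := J) (fun p hp => Finset.mem_image_of_mem _ hp)
    exact_mod_cast congrArg Nat.cast this
  calc ρ * τ * (W.card : ℝ) = ρ * (τ * W.card) := by ring
    _ ≤ ρ * ∑ u ∈ J, ((U u).card : ℝ) := mul_le_mul_of_nonneg_left htrans hρ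
    _ = ∑ u ∈ J, ρ * ((U u).card : ℝ) := Finset.mul_sum _ _ _
    _ ≤ ∑ u ∈ J, ((U u + S).card : ℝ) := Finset.sum_le_sum fun u _ => hG (U u) (hUA u)
    _ ≤ ∑ u ∈ J, ((V.filter (fun p => p.2 = u)).card : ℝ) := Finset.sum_le_sum fun u _ => hfiber u
    _ = (V.card : ℝ) := hVcard.symm

end Prod

section Pi
variable {G : Type*} [AddCommGroup G] [DecidableEq G]

def piSuccAddEquiv (m : ℕ) : (Fin (m + 1) → G) ≃+ G × (Fin m → G) where
  toFun f := (f 0, fun i => f i.succ)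
  invFun p := Fin.cons p.1 p.2
  left_inv f := Fin.cons_self_tail f
  right_inv p := by
    refine Prod.ext rfl ?_
    funext i
    simp
  map_add' f g := rfl

lemma image_piSuccAddEquiv_piFinset (m : ℕ) (A : Finset G) :
    (Fintype.piFinset fun _ : Fin (m + 1) => A).image (piSuccAddEquiv m)
      = A ×ˢ Fintype.piFinset (fun _ : Fin m => A) := by
  ext p
  simp only [Finset.mem_image, Fintype.mem_piFinset, Finset.mem_product]
  constructor
  · rintro ⟨f, hf, rfl⟩
    exact ⟨hf 0, fun i => hf i.succ⟩
  · rintro ⟨h1, h2⟩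
    refine ⟨Fin.cons p.1 p.2, ?_, ?_⟩
    · intro j
      refine Fin.cases ?_ ?_ j
      · simpa using h1
      · intro i; simpa using h2 i
    · exact (piSuccAddEquiv m).right_inv p

lemma pi_ratio (A S : Finset G) (hS : S.Nonempty) (ρ : ℝ) (hρ : 0 ≤ ρ)
    (h : ∀ Y ⊆ A, ρ * Y.card ≤ ((Y + S).card : ℝ)) :
    ∀ (m : ℕ), ∀ W ⊆ Fintype.piFinset (fun _ : Fin m => A),
      ρ ^ m * W.card ≤ ((W + Fintype.piFinset fun _ : Fin m => S).card : ℝ) := by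
  intro m
  induction m with
  | zero =>
      intro W _
      have hsing : (Fintype.piFinset fun _ : Fin 0 => S) = (0 : Finset (Fin 0 → G)) := by
        ext f
        simp [Fintype.mem_piFinset, Finset.mem_zero, eq_iff_true_of_subsingleton]
      rw [hsing, pow_zero, one_mul, add_zero]
  | succ m ih =>
      intro W hW
      set e := (piSuccAddEquiv (G := G) m) with he
      have hW' : W.image e ⊆ A ×ˢ Fintype.piFinset (fun _ : Fin m => A) := by
        rw [← image_piSuccAddEquiv_piFinset]
        exact Finset.image_subset_image hW
      have hTne : (Fintype.piFinset fun _ : Fin m => S).Nonempty :=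
        Fintype.piFinset_nonempty.2 fun _ => hS
      have key := prod_ratio A S (Fintype.piFinset fun _ : Fin m => A)
        (Fintype.piFinset fun _ : Fin m => S) hS ρ (ρ ^ m) hρ (pow_nonneg hρ m)
        h (fun Z hZ => ih Z hZ) (W.image e) hW'
      have him : W.image e + S ×ˢ Fintype.piFinset (fun _ : Fin m => S)
          = (W + Fintype.piFinset fun _ : Fin (m + 1) => S).image e := by
        rw [Finset.image_add, image_piSuccAddEquiv_piFinset]
      have hcard1 : ((W.image e).card : ℝ) = W.card := by
        rw [Finset.card_image_of_injective _ (piSuccAddEquiv m).injective]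
      have hcard2 : (((W + Fintype.piFinset fun _ : Fin (m + 1) => S).image e).card : ℝ)
          = ((W + Fintype.piFinset fun _ : Fin (m + 1) => S).card : ℝ) := by
        rw [Finset.card_image_of_injective _ (piSuccAddEquiv m).injective]
      rw [him, hcard1, hcard2] at key
      calc ρ ^ (m + 1) * (W.card : ℝ) = ρ * ρ ^ m * W.card := by rw [pow_succ]; ring
        _ ≤ _ := key
end Pi

set_option maxHeartbeats 1000000 in
theorem plunnecke_different_summands {G : Type*} [AddCommGroup G] [DecidableEq G]
    (h : ℕ) (A : Finset G) (B : Fin h → Finset G) (hA : A.Nonempty)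
    (hB : ∀ i, (B i).Nonempty) (α : Fin h → ℝ)
    (hα : ∀ i, ((A + B i).card : ℝ) = α i * A.card) :
    ∃ X ⊆ A, X.Nonempty ∧
      ((X + ∑ i, B i).card : ℝ) ≤ (∏ i, α i) * X.card := by
  classical
  rcases Nat.eq_zero_or_pos h with rfl | hh
  · refine ⟨A, Finset.Subset.refl A, hA, ?_⟩
    simp
  haveI : NeZero h := ⟨hh.ne'⟩
  set S : Finset G := ∑ i, B i with hSdef
  have hSne : S.Nonempty := finsetSum_nonempty _ _ fun i _ => hB i
  obtain ⟨X, hXA, hXne, hmin⟩ := exists_good_min A S hA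
  have hX0 : (0:ℝ) < X.card := by exact_mod_cast hXne.card_pos
  have hA0 : (0:ℝ) < A.card := by exact_mod_cast hA.card_pos
  set ρ : ℝ := ((X + S).card : ℝ) / X.card with hρdef
  have hρ0 : 0 ≤ ρ := by positivity
  have hρA : ∀ Y ⊆ A, ρ * (Y.card : ℝ) ≤ ((Y + S).card : ℝ) := by
    intro Y hY
    rw [hρdef, div_mul_eq_mul_div, div_le_iff₀ hX0]
    exact_mod_cast hmin Y hY
  set c : ℝ := ∏ i, α i with hcdef
  have hαi : ∀ i, 1 ≤ α i := by
    intro i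
    have h1 : (A.card:ℝ) ≤ ((A + B i).card : ℝ) := by
      exact_mod_cast Finset.card_le_card_add_right (hB i)
    rw [hα i] at h1
    nlinarith
  have hc1 : (1:ℝ) ≤ c := by
    rw [hcdef]
    have := Finset.prod_le_prod (s := (Finset.univ : Finset (Fin h)))
      (f := fun _ : Fin h => (1:ℝ)) (g := α)
      (fun i _ => by norm_num) (fun i _ => hαi i)
    simpa using this
  have hprodAB : ∏ i, ((A + B i).card : ℝ) = c * (A.card:ℝ) ^ h := by
    calc ∏ i, ((A + B i).card : ℝ) = ∏ i, (α i * A.card) :=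
          Finset.prod_congr rfl fun i _ => hα i
      _ = c * (A.card:ℝ) ^ h := by
          rw [Finset.prod_mul_distrib, Finset.prod_const, ← hcdef]
          simp [Finset.card_univ]
  have hK := pi_ratio A S hSne ρ hρ0 hρA h
  set D : Fin h → Finset (Fin h → G) := fun j => Fintype.piFinset fun c' => B (j + c') with hDdef
  set A0 : Finset (Fin h → G) := Fintype.piFinset fun _ => A with hA0def
  set S0 : Finset (Fin h → G) := Fintype.piFinset fun _ => S with hS0def
  have hS0ne : S0.Nonempty := Fintype.piFinset_nonempty.2 fun _ => hSne
  have hC1 : S0 ⊆ ∑ j : Fin h, D j := by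
    intro f hf
    have hf' : ∀ c', f c' ∈ ∑ i : Fin h, B i := by
      intro c'
      have := Fintype.mem_piFinset.1 hf c'
      rwa [hSdef] at this
    choose b hb hfb using fun c' => exists_rep_of_mem_finsetSum Finset.univ B (hf' c')
    have hfeq : f = ∑ j : Fin h, (fun c' => b c' (j + c')) := by
      funext c'
      rw [Finset.sum_apply, hfb c']
      exact (Fintype.sum_equiv (Equiv.addRight c') _ _ fun j => rfl).symm
    rw [hfeq]
    exact mem_finsetSum_of _ _ _ fun j _ =>
      Fintype.mem_piFinset.2 fun c' => hb c' (j + c') (Finset.mem_univ _)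
  have hC2 : ∀ j, ((A0 + D j).card : ℝ) = c * (A.card:ℝ) ^ h := by
    intro j
    rw [show A0 + D j = Fintype.piFinset (fun c' => A + B (j + c')) from
      (Fintype.piFinset_add _ _).symm]
    rw [Fintype.card_piFinset]
    push_cast
    rw [← hprodAB]
    exact Fintype.prod_equiv (Equiv.addLeft j) _ _ fun c' => rfl
  have key : ∀ N : ℕ, (ρ ^ h) ^ N ≤ (h:ℝ) ^ h * (c ^ h) ^ N := by
    intro N
    set AN : Finset (Fin N → Fin h → G) := Fintype.piFinset fun _ => A0 with hANdef
    set F : Finset (Fin N → Fin h → G) :=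
      Finset.univ.biUnion (fun j : Fin h => Fintype.piFinset fun _ : Fin N => D j) with hFdef
    have hANne : AN.Nonempty :=
      Fintype.piFinset_nonempty.2 fun _ => Fintype.piFinset_nonempty.2 fun _ => hA
    have hAN0 : (0:ℝ) < AN.card := by exact_mod_cast hANne.card_pos
    obtain ⟨Y, hYAN, hYne, hYmin⟩ := exists_good_min AN F hANne
    have hY0 : (0:ℝ) < Y.card := by exact_mod_cast hYne.card_pos
    have hcards : ∀ j : Fin h,
        ((AN + Fintype.piFinset fun _ : Fin N => D j).card : ℝ) = (c * (A.card:ℝ)^h) ^ N := by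
      intro j
      rw [show AN + Fintype.piFinset (fun _ : Fin N => D j)
          = Fintype.piFinset (fun _ : Fin N => A0 + D j) from (Fintype.piFinset_add _ _).symm]
      rw [Fintype.card_piFinset]
      push_cast
      rw [Finset.prod_const, hC2 j]
      simp [Finset.card_univ]
    have hANF : ((AN + F).card : ℝ) ≤ (h:ℝ) * (c * (A.card:ℝ)^h) ^ N := by
      have hsub : AN + F ⊆ Finset.univ.biUnion
          (fun j : Fin h => AN + Fintype.piFinset fun _ : Fin N => D j) := by
        intro x hx
        obtain ⟨a, ha, f, hf, rfl⟩ := Finset.mem_add.1 hx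
        obtain ⟨j, _, hfj⟩ := Finset.mem_biUnion.1 hf
        exact Finset.mem_biUnion.2 ⟨j, Finset.mem_univ j, Finset.add_mem_add ha hfj⟩
      calc ((AN + F).card : ℝ)
          ≤ ((Finset.univ.biUnion fun j : Fin h =>
              AN + Fintype.piFinset fun _ : Fin N => D j).card : ℝ) := by
            exact_mod_cast Finset.card_le_card hsub
        _ ≤ ∑ j : Fin h, ((AN + Fintype.piFinset fun _ : Fin N => D j).card : ℝ) := by
            exact_mod_cast Finset.card_biUnion_le
        _ = ∑ _j : Fin h, (c * (A.card:ℝ)^h) ^ N := Finset.sum_congr rfl fun j _ => hcards j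
        _ = (h:ℝ) * (c * (A.card:ℝ)^h) ^ N := by
            rw [Finset.sum_const]
            simp [Finset.card_univ]
    have hsubS : Fintype.piFinset (fun _ : Fin N => S0) ⊆ h • F := by
      calc Fintype.piFinset (fun _ : Fin N => S0)
          ⊆ Fintype.piFinset (fun _ : Fin N => ∑ j : Fin h, D j) :=
            Fintype.piFinset_subset _ _ fun _ => hC1
        _ = ∑ j : Fin h, Fintype.piFinset (fun _ : Fin N => D j) :=
            (piFinset_finsetSum _ _).symm
        _ ⊆ ∑ _j : Fin h, F := finsetSum_subset_finsetSum _ _ _ fun j _ => by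
            rw [hFdef]
            exact Finset.subset_biUnion_of_mem
              (fun j : Fin h => Fintype.piFinset fun _ : Fin N => D j) (Finset.mem_univ j)
        _ = h • F := by rw [Finset.sum_const, Finset.card_univ, Fintype.card_fin]
    have hlow : (ρ ^ h) ^ N * (Y.card : ℝ) ≤ ((Y + h • F).card : ℝ) := by
      have h1 := pi_ratio (G := Fin h → G) A0 S0 hS0ne (ρ ^ h) (pow_nonneg hρ0 h)
        (fun Z hZ => hK Z hZ) N Y hYAN
      refine h1.trans ?_
      exact_mod_cast Finset.card_le_card (Finset.add_subset_add_left hsubS)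
    have hup := petridis_iter Y F hYne (fun Z hZ => hYmin Z (hZ.trans hYAN)) h
    have hratio : ((Y + F).card : ℝ) * AN.card ≤ ((AN + F).card : ℝ) * Y.card := by
      exact_mod_cast hYmin AN (Finset.Subset.refl AN)
    -- cancellations
    have e1 : ((ρ ^ h) ^ N * (Y.card:ℝ) ^ h) * Y.card ≤ ((Y + F).card : ℝ) ^ h * Y.card := by
      calc ((ρ ^ h) ^ N * (Y.card:ℝ) ^ h) * Y.card
          = ((ρ ^ h) ^ N * Y.card) * (Y.card:ℝ) ^ h := by ring
        _ ≤ ((Y + h • F).card : ℝ) * (Y.card:ℝ) ^ h :=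
            mul_le_mul_of_nonneg_right hlow (by positivity)
        _ ≤ ((Y + F).card : ℝ) ^ h * Y.card := hup
    have e2 : (ρ ^ h) ^ N * (Y.card:ℝ) ^ h ≤ ((Y + F).card : ℝ) ^ h :=
      le_of_mul_le_mul_right e1 hY0
    have e3 : ((ρ ^ h) ^ N * (AN.card:ℝ) ^ h) * (Y.card:ℝ) ^ h
        ≤ ((AN + F).card : ℝ) ^ h * (Y.card:ℝ) ^ h := by
      calc ((ρ ^ h) ^ N * (AN.card:ℝ) ^ h) * (Y.card:ℝ) ^ h
          = ((ρ ^ h) ^ N * (Y.card:ℝ) ^ h) * (AN.card:ℝ) ^ h := by ring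
        _ ≤ ((Y + F).card : ℝ) ^ h * (AN.card:ℝ) ^ h :=
            mul_le_mul_of_nonneg_right e2 (by positivity)
        _ = (((Y + F).card : ℝ) * AN.card) ^ h := by rw [mul_pow]
        _ ≤ (((AN + F).card : ℝ) * Y.card) ^ h :=
            pow_le_pow_left₀ (mul_nonneg (Nat.cast_nonneg _) (Nat.cast_nonneg _)) hratio h
        _ = ((AN + F).card : ℝ) ^ h * (Y.card:ℝ) ^ h := by rw [mul_pow]
    have e4 : (ρ ^ h) ^ N * (AN.card:ℝ) ^ h ≤ ((AN + F).card : ℝ) ^ h :=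
      le_of_mul_le_mul_right e3 (by positivity)
    have hANcard : (AN.card : ℝ) = ((A.card:ℝ) ^ h) ^ N := by
      rw [hANdef, Fintype.card_piFinset]
      push_cast
      rw [Finset.prod_const, hA0def, Fintype.card_piFinset, Finset.prod_const]
      simp [Finset.card_univ]
    have e5 : ((AN + F).card : ℝ) ^ h ≤ ((h:ℝ) * (c * (A.card:ℝ)^h) ^ N) ^ h :=
      pow_le_pow_left₀ (Nat.cast_nonneg _) hANF h
    have e6 : (ρ ^ h) ^ N * (((A.card:ℝ) ^ h) ^ N) ^ h
        ≤ (h:ℝ) ^ h * (c ^ h) ^ N * (((A.card:ℝ) ^ h) ^ N) ^ h := by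
      have := (e4.trans e5)
      rw [hANcard] at this
      calc (ρ ^ h) ^ N * (((A.card:ℝ) ^ h) ^ N) ^ h
          ≤ ((h:ℝ) * (c * (A.card:ℝ)^h) ^ N) ^ h := this
        _ = (h:ℝ) ^ h * (c ^ h) ^ N * (((A.card:ℝ) ^ h) ^ N) ^ h := by
            ring
    exact le_of_mul_le_mul_right e6 (by positivity)
  refine ⟨X, hXA, hXne, ?_⟩
  have hρc : ρ ≤ c := by
    by_contra hcon
    push_neg at hcon
    have hc0 : (0:ℝ) < c := lt_of_lt_of_le zero_lt_one hc1
    have hone : 1 < ρ / c := (one_lt_div hc0).2 hcon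
    have honeh : 1 < (ρ / c) ^ h := one_lt_pow₀ hone hh.ne'
    obtain ⟨N, hN⟩ := pow_unbounded_of_one_lt ((h:ℝ) ^ h) honeh
    have hkeyN := key N
    have hch : (0:ℝ) < (c ^ h) ^ N := by positivity
    have : ((ρ / c) ^ h) ^ N ≤ (h:ℝ) ^ h := by
      rw [div_pow, div_pow, div_le_iff₀ hch]
      exact hkeyN
    exact absurd this (not_le.2 hN)
  have hXS : ((X + S).card : ℝ) = ρ * X.card := by
    rw [hρdef]; field_simp
  rw [hXS]
  exact mul_le_mul_of_nonneg_right hρc hX0.le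
end

section
/- Suppose c ≥ 1 is a constant such that |S + A|² ≤ c² · |S| · |A + B₁| · |A + B₂| holds for all finite nonempty sets A, B₁, B₂ and all nonempty S ⊆ B₁ + B₂ in every commutative group. Then the inequality |S + A|² ≤ |S| · |A + B₁| · |A + B₂| holds (with constant 1), by a tensor power (direct power) argument. -/
/-!
Applying the inequality to the direct powers `A^k, B₁^k, B₂^k, S^k` in `G^k` raises every
cardinality to the `k`-th power but leaves the constant alone, so
`(|S + A|² / (|S| |A + B₁| |A + B₂|))^k ≤ c²` for all `k`, which forces the ratio to be at most `1`.
-/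

open Pointwise Finset Fintype

theorem le_of_forall_pow_le_mul_pow {K : Type*} [Field K] [LinearOrder K] [IsStrictOrderedRing K]
    [Archimedean K] {x y : K} (C : K) (hy : 0 ≤ y) (h : ∀ k : ℕ, x ^ k ≤ C * y ^ k) : x ≤ y := by
  by_contra! hyx
  rcases hy.eq_or_lt with rfl | hy
  · exact hyx.not_ge (by simpa using h 1)
  obtain ⟨k, hk⟩ := pow_unbounded_of_one_lt C ((one_lt_div hy).2 hyx)
  rw [div_pow, lt_div_iff₀ (by positivity)] at hk
  exact (h k).not_gt hk

theorem card_piFinset_const_add {G : Type*} [AddCommGroup G] [DecidableEq G] (A B : Finset G)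
    (n : ℕ) : #(piFinset (fun _ : Fin n ↦ A) + piFinset fun _ ↦ B) = #(A + B) ^ n := by
  rw [← piFinset_add, card_piFinset_const]

theorem sumset_card_sq_pow_le_of_piFinset {G : Type*} [AddCommGroup G] [DecidableEq G] (c : ℝ)
    (n : ℕ) {A B₁ B₂ S : Finset G} (hA : A.Nonempty) (hB₁ : B₁.Nonempty) (hB₂ : B₂.Nonempty)
    (hS : S.Nonempty) (hSB : S ⊆ B₁ + B₂)
    (H : ∀ A B₁ B₂ S : Finset (Fin n → G), A.Nonempty → B₁.Nonempty → B₂.Nonempty →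
      S.Nonempty → S ⊆ B₁ + B₂ →
      ((S + A).card : ℝ) ^ 2 ≤ c ^ 2 * S.card * (A + B₁).card * (A + B₂).card) :
    ((#(S + A) : ℝ) ^ 2) ^ n ≤ c ^ 2 * ((#S : ℝ) * #(A + B₁) * #(A + B₂)) ^ n := by
  have hpow := H (piFinset fun _ ↦ A) (piFinset fun _ ↦ B₁) (piFinset fun _ ↦ B₂)
    (piFinset fun _ ↦ S) (piFinset_nonempty.2 fun _ ↦ hA) (piFinset_nonempty.2 fun _ ↦ hB₁)
    (piFinset_nonempty.2 fun _ ↦ hB₂) (piFinset_nonempty.2 fun _ ↦ hS)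
    (by rw [← piFinset_add]; exact piFinset_subset _ _ fun _ ↦ hSB)
  simp only [card_piFinset_const_add, card_piFinset_const, Nat.cast_pow] at hpow
  calc ((#(S + A) : ℝ) ^ 2) ^ n = ((#(S + A) : ℝ) ^ n) ^ 2 := by ring
    _ ≤ c ^ 2 * (#S : ℝ) ^ n * (#(A + B₁) : ℝ) ^ n * (#(A + B₂) : ℝ) ^ n := hpow
    _ = c ^ 2 * ((#S : ℝ) * #(A + B₁) * #(A + B₂)) ^ n := by ring

theorem tensor_power_trick_general (c : ℝ)
    (H : ∀ (G : Type) (_ : AddCommGroup G) (_ : DecidableEq G)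
        (A B₁ B₂ S : Finset G), A.Nonempty → B₁.Nonempty → B₂.Nonempty →
        S.Nonempty → S ⊆ B₁ + B₂ →
        ((S + A).card : ℝ) ^ 2 ≤ c ^ 2 * S.card * (A + B₁).card * (A + B₂).card) :
    ∀ (G : Type) (_ : AddCommGroup G) (_ : DecidableEq G)
        (A B₁ B₂ S : Finset G), A.Nonempty → B₁.Nonempty → B₂.Nonempty →
        S.Nonempty → S ⊆ B₁ + B₂ →
        ((S + A).card : ℝ) ^ 2 ≤ S.card * (A + B₁).card * (A + B₂).card := by
  intro G _ _ A B₁ B₂ S hA hB₁ hB₂ hS hSB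
  exact le_of_forall_pow_le_mul_pow (c ^ 2) (by positivity) fun n ↦
    sumset_card_sq_pow_le_of_piFinset c n hA hB₁ hB₂ hS hSB
      (H (Fin n → G) inferInstance inferInstance)

theorem tensor_power_trick (c : ℝ) (hc : 1 ≤ c)
    (H : ∀ (G : Type) (_ : AddCommGroup G) (_ : DecidableEq G)
        (A B₁ B₂ S : Finset G), A.Nonempty → B₁.Nonempty → B₂.Nonempty →
        S.Nonempty → S ⊆ B₁ + B₂ →
        ((S + A).card : ℝ) ^ 2 ≤ c ^ 2 * S.card * (A + B₁).card * (A + B₂).card) :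
    ∀ (G : Type) (_ : AddCommGroup G) (_ : DecidableEq G)
        (A B₁ B₂ S : Finset G), A.Nonempty → B₁.Nonempty → B₂.Nonempty →
        S.Nonempty → S ⊆ B₁ + B₂ →
        ((S + A).card : ℝ) ^ 2 ≤ S.card * (A + B₁).card * (A + B₂).card :=
  tensor_power_trick_general c H
end
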